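/- arXiv:1304.2458 — 6 statements merged into one kernel-verified Lean document; each statement's English description precedes it below -/
import Mathlib

section
/- Let S be a real skew-symmetric n×n matrix and write its characteristic polynomial as Σ_{i=0}^{⌊n/2⌋} a_{2i} x^{n-2i}. Then a_{2i} ≥ 0 for every i with 0 ≤ i ≤ ⌊n/2⌋. -/
/-!
The complex eigenvalues of a real skew-symmetric matrix are purely imaginary: for an eigenvector
`v`, skew-Hermitianity gives `z ⟪v, v⟫ = -conj z ⟪v, v⟫`. A monic real polynomial whose complex
roots all have nonpositive real part splits over `ℝ` into factors `X - r` with `r ≤ 0` and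
`X ^ 2 - 2 Re z X + |z| ^ 2` with `Re z ≤ 0`, each with nonnegative coefficients, so all of its
coefficients are nonnegative.
-/

open Matrix Polynomial

namespace Matrix

open scoped ComplexOrder

variable {n 𝕜 : Type*} [Fintype n] [RCLike 𝕜]

theorem re_eq_zero_of_conjTranspose_eq_neg_of_mulVec_eq_smul {A : Matrix n n 𝕜} (hA : Aᴴ = -A)
    {v : n → 𝕜} (hv : v ≠ 0) {z : 𝕜} (hAv : A *ᵥ v = z • v) : RCLike.re z = 0 := by
  have hquad : z * (star v ⬝ᵥ v) = -(star z * (star v ⬝ᵥ v)) := calc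
    z * (star v ⬝ᵥ v) = star v ⬝ᵥ A *ᵥ v := by rw [hAv, dotProduct_smul, smul_eq_mul]
    _ = -(star (A *ᵥ v) ⬝ᵥ v) := by
      rw [dotProduct_mulVec, star_mulVec, hA, vecMul_neg, neg_dotProduct, neg_neg]
    _ = -(star z * (star v ⬝ᵥ v)) := by rw [hAv, star_smul, smul_dotProduct, smul_eq_mul]
  have hsum : (z + star z) * (star v ⬝ᵥ v) = 0 := by linear_combination hquad
  have hre : z + star z = 0 :=
    (mul_eq_zero.1 hsum).resolve_right (dotProduct_star_self_eq_zero.not.2 hv)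
  rw [RCLike.star_def, RCLike.add_conj] at hre
  exact_mod_cast (mul_eq_zero.1 hre).resolve_left two_ne_zero

theorem re_eq_zero_of_conjTranspose_eq_neg_of_eval_charpoly_eq_zero [DecidableEq n]
    {A : Matrix n n 𝕜} (hA : Aᴴ = -A) {z : 𝕜} (hz : A.charpoly.eval z = 0) : RCLike.re z = 0 := by
  rw [eval_charpoly, ← exists_mulVec_eq_zero_iff] at hz
  obtain ⟨v, hv, hzv⟩ := hz
  refine re_eq_zero_of_conjTranspose_eq_neg_of_mulVec_eq_smul hA hv ?_
  rw [sub_mulVec, sub_eq_zero] at hzv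
  rw [← hzv]
  ext i
  simp [mulVec_diagonal]

end Matrix

namespace Polynomial

theorem coeff_mul_nonneg {p q : ℝ[X]} (hp : ∀ k, 0 ≤ p.coeff k) (hq : ∀ k, 0 ≤ q.coeff k)
    (k : ℕ) : 0 ≤ (p * q).coeff k := by
  rw [coeff_mul]
  exact Finset.sum_nonneg fun _ _ => mul_nonneg (hp _) (hq _)

theorem exists_monic_coeff_nonneg_dvd_of_aeval_eq_zero {p : ℝ[X]} {z : ℂ} (hz : aeval z p = 0)
    (hre : z.re ≤ 0) :
    ∃ d : ℝ[X], d.Monic ∧ 0 < d.natDegree ∧ (∀ k, 0 ≤ d.coeff k) ∧ d ∣ p := by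
  by_cases him : z.im = 0
  · refine ⟨X - C z.re, monic_X_sub_C _, by simp, fun k => ?_, ?_⟩
    · rw [coeff_sub, coeff_X, coeff_C]
      split_ifs <;> linarith
    · have hz_re : z = algebraMap ℝ ℂ z.re := Complex.ext rfl (by simp [him])
      rw [hz_re, aeval_algebraMap_apply_eq_algebraMap_eval] at hz
      rw [dvd_iff_isRoot, IsRoot]
      simpa using hz
  · refine ⟨X ^ 2 - C (2 * z.re) * X + C (‖z‖ ^ 2), ?_, ?_, fun k => ?_,
      quadratic_dvd_of_aeval_eq_zero_im_ne_zero p hz him⟩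
    · monicity!
    · have hdeg : (X ^ 2 - C (2 * z.re) * X + C (‖z‖ ^ 2)).natDegree = 2 := by compute_degree!
      omega
    · rw [coeff_add, coeff_sub, coeff_X_pow, coeff_C_mul_X, coeff_C]
      split_ifs <;> nlinarith [norm_nonneg z]

theorem Monic.coeff_nonneg_of_forall_aeval_eq_zero_re_nonpos {p : ℝ[X]} (hp : p.Monic)
    (hroots : ∀ z : ℂ, aeval z p = 0 → z.re ≤ 0) (k : ℕ) : 0 ≤ p.coeff k := by
  induction hdeg : p.natDegree using Nat.strong_induction_on generalizing p k with
  | _ m ih =>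
  by_cases hm : m = 0
  · rw [hp.natDegree_eq_zero.1 (hdeg.trans hm), coeff_one]
    split_ifs <;> norm_num
  obtain ⟨z, hz⟩ := IsAlgClosed.exists_aeval_eq_zero ℂ p
    fun h => hm (hdeg ▸ natDegree_eq_of_degree_eq_some h)
  obtain ⟨d, hd, hd_pos, hd_nonneg, q, rfl⟩ :=
    exists_monic_coeff_nonneg_dvd_of_aeval_eq_zero hz (hroots z hz)
  have hq : q.Monic := hd.of_mul_monic_left hp
  refine coeff_mul_nonneg hd_nonneg
    (fun j => ih q.natDegree ?_ hq (fun w hw => hroots w ?_) j rfl) k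
  · rw [← hdeg, hd.natDegree_mul hq]; omega
  · rw [map_mul, hw, mul_zero]

end Polynomial

theorem skew_symmetric_charpoly_even_coeff_nonneg_general
    {n : ℕ} (S : Matrix (Fin n) (Fin n) ℝ) (hskew : Sᵀ = -S)
    (i : ℕ) :
    0 ≤ S.charpoly.coeff (n - 2 * i) := by
  refine S.charpoly_monic.coeff_nonneg_of_forall_aeval_eq_zero_re_nonpos (fun z hz => ?_) _
  have hskewHerm : (S.map (algebraMap ℝ ℂ))ᴴ = -S.map (algebraMap ℝ ℂ) := by
    ext a b
    simpa using congrArg (algebraMap ℝ ℂ) (congrFun (congrFun hskew a) b)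
  refine (re_eq_zero_of_conjTranspose_eq_neg_of_eval_charpoly_eq_zero hskewHerm ?_).le
  rwa [charpoly_map, eval_map_algebraMap]

/-- If `S` is a real skew-symmetric matrix with characteristic polynomial
`∑_{i=0}^{⌊n/2⌋} a_{2i} x^{n-2i}`, then `a_{2i} ≥ 0` for all `0 ≤ i ≤ ⌊n/2⌋`.
Here `a_{2i}` is the coefficient of `x^{n-2i}`. -/
theorem skew_symmetric_charpoly_even_coeff_nonneg
    {n : ℕ} (S : Matrix (Fin n) (Fin n) ℝ) (hskew : Sᵀ = -S)
    (i : ℕ) (hi : i ≤ n / 2) :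
    0 ≤ S.charpoly.coeff (n - 2 * i) :=
  skew_symmetric_charpoly_even_coeff_nonneg_general S hskew i
end

section
/- Let G^σ be an oriented graph on n vertices with skew characteristic polynomial Σ_{i=0}^n (-1)^i a_i λ^{n-i}. Then a_4 ≥ M(G,2) - 2q(G), where M(G,2) is the number of 2-matchings in the underlying graph G and q(G) is the number of quadrangles (4-cycles) in G. Equality holds if and only if every quadrangle of G is evenly oriented under σ. -/
open Matrix Polynomial Finset

/-- The number of 2-matchings (pairs of disjoint edges) of a simple graph. -/
noncomputable def twoMatchingCount {n : ℕ} (G : SimpleGraph (Fin n)) : ℕ :=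
  letI := Classical.decRel G.Adj
  ((G.edgeFinset.powersetCard 2).filter
    (fun s => ∀ e ∈ s, ∀ f ∈ s, e ≠ f → ∀ v : Fin n, ¬ (v ∈ e ∧ v ∈ f))).card

/-- The number of quadrangles (4-cycles) of a simple graph: each 4-cycle corresponds
to exactly 8 cyclically adjacent quadruples of distinct vertices. -/
noncomputable def quadCount {n : ℕ} (G : SimpleGraph (Fin n)) : ℕ :=
  letI := Classical.decRel G.Adj
  (Finset.univ.filter (fun p : Fin n × Fin n × Fin n × Fin n =>
      p.1 ≠ p.2.1 ∧ p.1 ≠ p.2.2.1 ∧ p.1 ≠ p.2.2.2 ∧ p.2.1 ≠ p.2.2.1 ∧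
      p.2.1 ≠ p.2.2.2 ∧ p.2.2.1 ≠ p.2.2.2 ∧
      G.Adj p.1 p.2.1 ∧ G.Adj p.2.1 p.2.2.1 ∧ G.Adj p.2.2.1 p.2.2.2 ∧
      G.Adj p.2.2.2 p.1)).card / 8

/-!
Expanding `det (λ - S)` over permutations, `a_4` is the sum of
`sign σ • ∏_{i ∈ supp σ} S (σ i) i` over the permutations moving exactly four vertices, and only
those moving every vertex along an edge of `G` contribute. Such a permutation is either a product
`(a b)(c d)` of two disjoint edge transpositions, contributing `(S_ba S_ab) (S_dc S_cd) = 1`; these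
correspond bijectively to the 2-matchings. Or it runs around a quadrangle `a → b → c → d → a`,
contributing `-w` with `w = S_ba S_cb S_dc S_ad = S_ab S_bc S_cd S_da = ±1`; each quadrangle is run
around by exactly two of them, one per direction, with the same `w`. Hence
`a_4 = M(G,2) - ∑ w` over `2 q(G)` terms `w = ±1`, with equality in `a_4 ≥ M(G,2) - 2 q(G)` iff
every `w` is `1`, i.e. every quadrangle is evenly oriented.
-/

open Equiv

theorem Finset.two_dvd_card_of_involution {α : Type*} {s : Finset α} (g : α → α)
    (hg : ∀ a ∈ s, g a ∈ s) (hgg : ∀ a ∈ s, g (g a) = a) (hne : ∀ a ∈ s, g a ≠ a) :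
    2 ∣ #s := by
  have h : ∑ _a ∈ s, (1 : ZMod 2) = 0 :=
    sum_involution (fun a _ => g a) (fun _ _ => by decide) (fun a ha _ => hne a ha) hg hgg
  simpa [ZMod.natCast_eq_zero_iff] using h

theorem List.nodup_four_iff {α : Type*} {a b c d : α} :
    [a, b, c, d].Nodup ↔ a ≠ b ∧ a ≠ c ∧ a ≠ d ∧ b ≠ c ∧ b ≠ d ∧ c ≠ d := by
  simp only [nodup_cons, mem_cons, not_mem_nil, nodup_nil]
  tauto

namespace Matrix

variable {ι R : Type*} [Fintype ι] [DecidableEq ι] [CommRing R] {A : Matrix ι ι R}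

theorem prod_charmatrix_apply_perm_of_diag_eq_zero (hA : ∀ i, A i i = 0) (σ : Perm ι) :
    ∏ i, charmatrix A (σ i) i =
      C (∏ i ∈ σ.support, -A (σ i) i) * X ^ (Fintype.card ι - #σ.support) := by
  rw [← prod_sdiff σ.support.subset_univ, mul_comm, map_prod]
  congr 1
  · exact prod_congr rfl fun i hi => by
      rw [charmatrix_apply_ne _ _ _ (Perm.mem_support.mp hi), map_neg]
  · rw [← card_univ, ← card_sdiff_of_subset σ.support.subset_univ, ← prod_const]
    refine prod_congr rfl fun i hi => ?_
    rw [Perm.notMem_support.mp (mem_sdiff.mp hi).2, charmatrix_apply_eq, hA, map_zero, sub_zero]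

theorem neg_one_pow_mul_charpoly_coeff_of_diag_eq_zero (hA : ∀ i, A i i = 0) {k : ℕ}
    (hk : k ≤ Fintype.card ι) :
    (-1) ^ k * A.charpoly.coeff (Fintype.card ι - k) =
      ∑ σ : Perm ι with #σ.support = k, Perm.sign σ • ∏ i ∈ σ.support, A (σ i) i := by
  simp only [charpoly, det_apply, finsetSum_coeff, coeff_smul,
    prod_charmatrix_apply_perm_of_diag_eq_zero hA, coeff_C_mul_X_pow, mul_sum, sum_filter]
  refine sum_congr rfl fun σ _ => ?_
  have hσ : #σ.support ≤ Fintype.card ι := card_le_univ _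
  by_cases h : #σ.support = k
  · rw [if_pos (by omega), if_pos h, prod_neg, h, mul_smul_comm, ← mul_assoc, ← pow_add,
      Even.neg_one_pow ⟨k, rfl⟩, one_mul]
  · rw [if_neg (by omega), if_neg h, smul_zero, mul_zero]

end Matrix

namespace Equiv.Perm

variable {α : Type*} [DecidableEq α] {a b c d : α}

theorem formPerm_four_apply (h : [a, b, c, d].Nodup) :
    [a, b, c, d].formPerm a = b ∧ [a, b, c, d].formPerm b = c ∧
      [a, b, c, d].formPerm c = d ∧ [a, b, c, d].formPerm d = a :=
  ⟨List.formPerm_apply_getElem _ h 0 (by simp), List.formPerm_apply_getElem _ h 1 (by simp),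
    List.formPerm_apply_getElem _ h 2 (by simp), by simp⟩

theorem swap_mul_swap_four_apply (h : [a, b, c, d].Nodup) :
    (swap a b * swap c d) a = b ∧ (swap a b * swap c d) b = a ∧
      (swap a b * swap c d) c = d ∧ (swap a b * swap c d) d = c := by
  rw [List.nodup_four_iff] at h
  simp only [Perm.mul_apply, swap_apply_def]
  grind

theorem involutive_swap_mul_swap (h : [a, b, c, d].Nodup) :
    Function.Involutive (swap a b * swap c d) := by
  intro x
  rw [← Perm.mul_apply, mul_assoc, ← mul_assoc (swap c d), ← (disjoint_swap_swap h).commute.eq]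
  simp [mul_assoc]

variable [Fintype α]

theorem support_formPerm_four (h : [a, b, c, d].Nodup) :
    [a, b, c, d].formPerm.support = {a, b, c, d} := by
  rw [List.support_formPerm_of_nodup _ h (by simp)]
  simp

theorem card_support_formPerm_four (h : [a, b, c, d].Nodup) :
    #([a, b, c, d].formPerm.support) = 4 := by
  rw [List.support_formPerm_of_nodup _ h (by simp), List.toFinset_card_of_nodup h]
  rfl

theorem prod_support_formPerm_four {M : Type*} [CommMonoid M] (h : [a, b, c, d].Nodup)
    (f : α → α → M) :
    ∏ i ∈ [a, b, c, d].formPerm.support, f ([a, b, c, d].formPerm i) i =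
      f b a * f c b * f d c * f a d := by
  obtain ⟨ha, hb, hc, hd⟩ := formPerm_four_apply h
  rw [List.support_formPerm_of_nodup _ h (by simp), List.prod_toFinset _ h]
  simp only [List.map_cons, List.map_nil, List.prod_cons, List.prod_nil, ha, hb, hc, hd,
    mul_one, mul_assoc]

theorem IsCycle.eq_formPerm_of_card_support_eq_four {σ : Perm α} (hσ : σ.IsCycle)
    (h4 : #σ.support = 4) {x : α} (hx : x ∈ σ.support) :
    [x, σ x, σ (σ x), σ (σ (σ x))].Nodup ∧ σ = [x, σ x, σ (σ x), σ (σ (σ x))].formPerm := by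
  have hcycleOf : σ.cycleOf x = σ := hσ.cycleOf_eq (mem_support.mp hx)
  have hlist : σ.toList x = [x, σ x, σ (σ x), σ (σ (σ x))] := by
    rw [toList, hcycleOf, h4]
    simp [List.iterate]
  rw [← hlist, formPerm_toList, hcycleOf]
  exact ⟨nodup_toList σ x, rfl⟩

theorem support_swap_mul_swap_of_nodup (h : [a, b, c, d].Nodup) :
    (swap a b * swap c d).support = {a, b, c, d} := by
  have h' := List.nodup_four_iff.mp h
  rw [(disjoint_swap_swap h).support_mul, support_swap h'.1, support_swap h'.2.2.2.2.2]
  ext x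
  simp only [mem_union, mem_insert, mem_singleton]
  tauto

theorem card_support_swap_mul_swap (h : [a, b, c, d].Nodup) :
    #(swap a b * swap c d).support = 4 := by
  rw [support_swap_mul_swap_of_nodup h, show ({a, b, c, d} : Finset α) = [a, b, c, d].toFinset by
    simp, List.toFinset_card_of_nodup h]
  rfl

theorem prod_support_swap_mul_swap {M : Type*} [CommMonoid M] (h : [a, b, c, d].Nodup)
    (f : α → α → M) :
    ∏ i ∈ (swap a b * swap c d).support, f ((swap a b * swap c d) i) i =
      f b a * f a b * f d c * f c d := by
  obtain ⟨ha, hb, hc, hd⟩ := swap_mul_swap_four_apply h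
  have h' := List.nodup_four_iff.mp h
  rw [support_swap_mul_swap_of_nodup h, prod_insert (by simp; tauto), prod_insert (by simp; tauto),
    prod_insert (by simp; tauto), prod_singleton, ha, hb, hc, hd, mul_assoc, mul_assoc]

theorem nodup_of_disjoint_swap_swap (hab : a ≠ b) (hcd : c ≠ d)
    (h : Disjoint (swap a b) (swap c d)) : [a, b, c, d].Nodup := by
  have := h.disjoint_support
  rw [support_swap hab, support_swap hcd] at this
  simp only [Finset.disjoint_insert_left, Finset.disjoint_singleton_left, mem_insert,
    mem_singleton] at this
  rw [List.nodup_four_iff]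
  tauto

theorem exists_swap_mul_swap_of_card_support_eq_four {σ : Perm α} (h4 : #σ.support = 4)
    (hσ : ¬σ.IsCycle) : ∃ a b c d, [a, b, c, d].Nodup ∧ σ = swap a b * swap c d := by
  have hσ1 : σ ≠ 1 := by rintro rfl; simp at h4
  obtain ⟨m, hm⟩ := Multiset.exists_mem_of_ne_zero (by rwa [Ne, cycleType_eq_zero (σ := σ)])
  obtain ⟨c, τ, rfl, hdisj, hc, rfl⟩ := mem_cycleType_iff.mp hm
  have hcard := hdisj.card_support_mul
  have hτ : τ ≠ 1 := by rintro rfl; exact hσ (by simpa using hc)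
  have hτ2 : 2 ≤ #τ.support := by
    have := τ.card_support_ne_one
    have := mt card_support_eq_zero.mp hτ
    omega
  have hc2 := hc.two_le_card_support
  obtain ⟨a, b, hab, rfl⟩ := card_support_eq_two.mp (show #c.support = 2 by omega)
  obtain ⟨c, d, hcd, rfl⟩ := card_support_eq_two.mp (show #τ.support = 2 by omega)
  exact ⟨a, b, c, d, nodup_of_disjoint_swap_swap hab hcd hdisj, rfl⟩

def edges (σ : Perm α) : Finset (Sym2 α) :=
  σ.support.image fun i => s(i, σ i)

theorem edges_swap_mul_swap (h : [a, b, c, d].Nodup) :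
    (swap a b * swap c d).edges = {s(a, b), s(c, d)} := by
  obtain ⟨ha, hb, hc, hd⟩ := swap_mul_swap_four_apply h
  rw [edges, support_swap_mul_swap_of_nodup h]
  simp only [image_insert, image_singleton, ha, hb, hc, hd, Sym2.eq_swap (a := b),
    Sym2.eq_swap (a := d)]
  ext e
  simp only [mem_insert, mem_singleton]
  tauto

theorem apply_eq_of_mk_mem_edges {σ : Perm α} (hσ : Function.Involutive σ) {x y : α}
    (h : s(x, y) ∈ σ.edges) : σ x = y := by
  obtain ⟨i, -, hi⟩ := mem_image.mp h
  rcases Sym2.eq_iff.mp hi with ⟨rfl, rfl⟩ | ⟨rfl, rfl⟩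
  · rfl
  · exact hσ i

theorem edges_injOn : Set.InjOn edges {σ : Perm α | Function.Involutive σ} := by
  have key : ∀ σ τ : Perm α, Function.Involutive τ → σ.edges = τ.edges →
      ∀ x, σ x ≠ x → τ x = σ x := fun σ τ hτ h x hx =>
    apply_eq_of_mk_mem_edges hτ (h ▸ mem_image_of_mem _ (mem_support.mpr hx))
  intro σ hσ τ hτ h
  ext x
  by_cases hσx : σ x = x
  · by_cases hτx : τ x = x
    · rw [hσx, hτx]
    · exact key τ σ hσ h.symm x hτx
  · exact (key σ τ hτ h x hσx).symm

end Equiv.Perm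

namespace SimpleGraph

variable {V : Type*} (G : SimpleGraph V)

structure IsSkewAdjMatrix (S : Matrix V V ℝ) : Prop where
  transpose_eq_neg : Sᵀ = -S
  apply_of_adj : ∀ i j, G.Adj i j → S i j = 1 ∨ S i j = -1
  apply_of_not_adj : ∀ i j, ¬G.Adj i j → S i j = 0

def MovesAlongEdges (σ : Perm V) : Prop :=
  ∀ i, σ i ≠ i → G.Adj i (σ i)

def IsQuadrangle (a b c d : V) : Prop :=
  [a, b, c, d].Nodup ∧ G.Adj a b ∧ G.Adj b c ∧ G.Adj c d ∧ G.Adj d a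

variable [Fintype V] [DecidableEq V]

open scoped Classical in
noncomputable def twoMatchings : Finset (Finset (Sym2 V)) :=
  (G.edgeFinset.powersetCard 2).filter
    fun s => ∀ e ∈ s, ∀ f ∈ s, e ≠ f → ∀ v : V, ¬(v ∈ e ∧ v ∈ f)

open scoped Classical in
noncomputable def twoMatchingPerms : Finset (Perm V) :=
  {σ | #σ.support = 4 ∧ ¬σ.IsCycle ∧ G.MovesAlongEdges σ}

open scoped Classical in
noncomputable def quadranglePerms : Finset (Perm V) :=
  {σ | #σ.support = 4 ∧ σ.IsCycle ∧ G.MovesAlongEdges σ}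

variable {G}

theorem mem_twoMatchings {M : Finset (Sym2 V)} :
    M ∈ G.twoMatchings ↔
      ∃ a b c d, [a, b, c, d].Nodup ∧ G.Adj a b ∧ G.Adj c d ∧ M = {s(a, b), s(c, d)} := by
  classical
  simp only [twoMatchings, mem_filter, mem_powersetCard]
  constructor
  · rintro ⟨⟨hsub, hcard⟩, hdisj⟩
    obtain ⟨e, f, hef, rfl⟩ := card_eq_two.mp hcard
    induction e using Sym2.ind with | _ a b => ?_
    induction f using Sym2.ind with | _ c d => ?_
    have hab : G.Adj a b := by simpa using hsub (mem_insert_self _ _)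
    have hcd : G.Adj c d := by simpa using hsub (mem_insert_of_mem (mem_singleton_self _))
    have hd := hdisj _ (mem_insert_self _ _) _ (mem_insert_of_mem (mem_singleton_self _)) hef
    refine ⟨a, b, c, d, ?_, hab, hcd, rfl⟩
    rw [List.nodup_four_iff]
    simp only [Sym2.mem_iff] at hd
    refine ⟨hab.ne, ?_, ?_, ?_, ?_, hcd.ne⟩ <;> rintro rfl <;> simp at hd
  · rintro ⟨a, b, c, d, h, hab, hcd, rfl⟩
    rw [List.nodup_four_iff] at h
    refine ⟨⟨?_, card_pair (by simp; tauto)⟩, ?_⟩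
    · intro e he
      simp only [mem_insert, mem_singleton] at he
      rcases he with rfl | rfl <;> simpa
    · simp only [mem_insert, mem_singleton]
      grind

theorem mem_twoMatchingPerms {σ : Perm V} :
    σ ∈ G.twoMatchingPerms ↔ ∃ a b c d, [a, b, c, d].Nodup ∧ G.Adj a b ∧ G.Adj c d ∧
      σ = swap a b * swap c d := by
  simp only [twoMatchingPerms, mem_filter, mem_univ, true_and]
  constructor
  · rintro ⟨h4, hcyc, halong⟩
    obtain ⟨a, b, c, d, h, rfl⟩ := Perm.exists_swap_mul_swap_of_card_support_eq_four h4 hcyc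
    obtain ⟨ha, -, hc, -⟩ := Perm.swap_mul_swap_four_apply h
    have h' := List.nodup_four_iff.mp h
    refine ⟨a, b, c, d, h, ?_, ?_, rfl⟩
    · simpa [ha] using halong a (by rw [ha]; exact h'.1.symm)
    · simpa [hc] using halong c (by rw [hc]; exact h'.2.2.2.2.2.symm)
  · rintro ⟨a, b, c, d, h, hab, hcd, rfl⟩
    obtain ⟨ha, hb, hc, hd⟩ := Perm.swap_mul_swap_four_apply h
    refine ⟨Perm.card_support_swap_mul_swap h, ?_, fun i hi => ?_⟩
    · rw [← Perm.card_cycleType_eq_one, Perm.cycleType_swap_mul_swap_of_nodup h]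
      decide
    · have hi' := Perm.mem_support.mpr hi
      simp only [Perm.support_swap_mul_swap_of_nodup h, mem_insert, mem_singleton] at hi'
      rcases hi' with rfl | rfl | rfl | rfl
      exacts [by rw [ha]; exact hab, by rw [hb]; exact hab.symm, by rw [hc]; exact hcd,
        by rw [hd]; exact hcd.symm]

theorem card_twoMatchingPerms : #G.twoMatchingPerms = #G.twoMatchings := by
  have hinv : Set.InjOn Perm.edges (G.twoMatchingPerms : Set (Perm V)) :=
    Perm.edges_injOn.mono fun σ hσ => by
    obtain ⟨a, b, c, d, h, -, -, rfl⟩ := mem_twoMatchingPerms.mp hσ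
    exact Perm.involutive_swap_mul_swap h
  rw [← card_image_of_injOn hinv]
  congr 1
  ext M
  simp only [mem_image, mem_twoMatchingPerms, mem_twoMatchings]
  constructor
  · rintro ⟨-, ⟨a, b, c, d, h, hab, hcd, rfl⟩, rfl⟩
    exact ⟨a, b, c, d, h, hab, hcd, Perm.edges_swap_mul_swap h⟩
  · rintro ⟨a, b, c, d, h, hab, hcd, rfl⟩
    exact ⟨_, ⟨a, b, c, d, h, hab, hcd, rfl⟩, Perm.edges_swap_mul_swap h⟩

theorem mem_quadranglePerms {σ : Perm V} :
    σ ∈ G.quadranglePerms ↔ #σ.support = 4 ∧ σ.IsCycle ∧ G.MovesAlongEdges σ := by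
  simp [quadranglePerms]

theorem formPerm_mem_quadranglePerms {a b c d : V} (hq : G.IsQuadrangle a b c d) :
    [a, b, c, d].formPerm ∈ G.quadranglePerms := by
  obtain ⟨h, hab, hbc, hcd, hda⟩ := hq
  obtain ⟨ha, hb, hc, hd⟩ := Perm.formPerm_four_apply h
  refine mem_quadranglePerms.mpr
    ⟨Perm.card_support_formPerm_four h, List.isCycle_formPerm h (by simp), fun i hi => ?_⟩
  have hi' := Perm.mem_support.mpr hi
  simp only [Perm.support_formPerm_four h, mem_insert, mem_singleton] at hi'
  rcases hi' with rfl | rfl | rfl | rfl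
  exacts [by rw [ha]; exact hab, by rw [hb]; exact hbc, by rw [hc]; exact hcd,
    by rw [hd]; exact hda]

theorem isQuadrangle_of_mem_quadranglePerms {σ : Perm V} (hσ : σ ∈ G.quadranglePerms) {x : V}
    (hx : x ∈ σ.support) : G.IsQuadrangle x (σ x) (σ (σ x)) (σ (σ (σ x))) := by
  obtain ⟨h4, hcyc, halong⟩ := mem_quadranglePerms.mp hσ
  obtain ⟨h, heq⟩ := hcyc.eq_formPerm_of_card_support_eq_four h4 hx
  have hσ4 : σ (σ (σ (σ x))) = x := by
    have := (Perm.formPerm_four_apply h).2.2.2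
    rwa [← heq] at this
  have h' := List.nodup_four_iff.mp h
  refine ⟨h, halong _ (Ne.symm h'.1), halong _ (Ne.symm h'.2.2.2.1),
    halong _ (Ne.symm h'.2.2.2.2.2), ?_⟩
  simpa [hσ4] using halong (σ (σ (σ x))) (by rw [hσ4]; exact h'.2.2.1)

theorem inv_mem_quadranglePerms {σ : Perm V} (hσ : σ ∈ G.quadranglePerms) :
    σ⁻¹ ∈ G.quadranglePerms := by
  obtain ⟨h4, hcyc, halong⟩ := mem_quadranglePerms.mp hσ
  refine mem_quadranglePerms.mpr ⟨by rwa [Perm.support_inv], hcyc.inv, fun i hi => ?_⟩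
  have := halong (σ⁻¹ i) (by simpa [eq_comm] using hi)
  simpa using this.symm

theorem two_dvd_card_quadranglePerms : 2 ∣ #G.quadranglePerms := by
  refine two_dvd_card_of_involution (·⁻¹) (fun σ => inv_mem_quadranglePerms) (fun σ _ => inv_inv σ)
    fun σ hσ hinv => ?_
  obtain ⟨h4, hcyc, -⟩ := mem_quadranglePerms.mp hσ
  have : orderOf σ ∣ 2 := orderOf_dvd_of_pow_eq_one (by rw [sq]; nth_rw 1 [← hinv]; simp)
  rw [hcyc.orderOf, h4] at this
  norm_num at this

open scoped Classical in
theorem card_isQuadrangle :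
    #{p : V × V × V × V | G.IsQuadrangle p.1 p.2.1 p.2.2.1 p.2.2.2} = 4 * #G.quadranglePerms := by
  have hsum : ∑ σ ∈ G.quadranglePerms, #σ.support = 4 * #G.quadranglePerms := by
    rw [sum_congr rfl fun σ hσ => (mem_quadranglePerms.mp hσ).1, sum_const, smul_eq_mul,
      mul_comm]
  rw [← hsum, ← card_sigma]
  refine card_nbij' (fun p => ⟨[p.1, p.2.1, p.2.2.1, p.2.2.2].formPerm, p.1⟩)
    (fun q => (q.2, q.1 q.2, q.1 (q.1 q.2), q.1 (q.1 (q.1 q.2)))) ?_ ?_ ?_ ?_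
  · rintro ⟨a, b, c, d⟩ hq
    simp only [mem_coe, mem_filter, mem_univ, true_and] at hq
    simp only [coe_sigma, Set.mem_sigma_iff, mem_coe]
    refine ⟨formPerm_mem_quadranglePerms hq, ?_⟩
    rw [Perm.support_formPerm_four hq.1]
    exact mem_insert_self _ _
  · rintro ⟨σ, x⟩ hq
    simp only [coe_sigma, Set.mem_sigma_iff, mem_coe] at hq
    simpa using isQuadrangle_of_mem_quadranglePerms hq.1 hq.2
  · rintro ⟨a, b, c, d⟩ hq
    simp only [mem_coe, mem_filter, mem_univ, true_and] at hq
    obtain ⟨ha, hb, hc, -⟩ := Perm.formPerm_four_apply hq.1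
    dsimp only
    rw [ha, hb, hc]
  · rintro ⟨σ, x⟩ hq
    simp only [coe_sigma, Set.mem_sigma_iff, mem_coe] at hq
    obtain ⟨-, heq⟩ := (mem_quadranglePerms.mp hq.1).2.1.eq_formPerm_of_card_support_eq_four
      (mem_quadranglePerms.mp hq.1).1 hq.2
    simp only
    rw [← heq]

end SimpleGraph

namespace SimpleGraph.IsSkewAdjMatrix

variable {V : Type*} {G : SimpleGraph V} {S : Matrix V V ℝ}

theorem apply_comm (hS : G.IsSkewAdjMatrix S) (i j : V) : S j i = -S i j := by
  simpa using congr_fun (congr_fun hS.transpose_eq_neg i) j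

theorem apply_self (hS : G.IsSkewAdjMatrix S) (i : V) : S i i = 0 := by
  linarith [hS.apply_comm i i]

theorem apply_ne_zero (hS : G.IsSkewAdjMatrix S) {i j : V} (h : S i j ≠ 0) : G.Adj i j :=
  not_not.mp fun hij => h (hS.apply_of_not_adj i j hij)

theorem apply_comm_mul_apply (hS : G.IsSkewAdjMatrix S) {i j : V} (h : G.Adj i j) :
    S j i * S i j = -1 := by
  rcases hS.apply_of_adj i j h with h' | h' <;> simp [hS.apply_comm i j, h']

variable [Fintype V] [DecidableEq V]

theorem movesAlongEdges_of_prod_ne_zero (hS : G.IsSkewAdjMatrix S) {σ : Perm V}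
    (h : ∏ i ∈ σ.support, S (σ i) i ≠ 0) : G.MovesAlongEdges σ := fun i hi =>
  (hS.apply_ne_zero (prod_ne_zero_iff.mp h i (Perm.mem_support.mpr hi))).symm

theorem prod_eq_one_or_neg_one (hS : G.IsSkewAdjMatrix S) {σ : Perm V}
    (hσ : G.MovesAlongEdges σ) :
    ∏ i ∈ σ.support, S (σ i) i = 1 ∨ ∏ i ∈ σ.support, S (σ i) i = -1 := by
  refine prod_induction _ (fun r => r = 1 ∨ r = -1) ?_ (Or.inl rfl)
    fun i hi => hS.apply_of_adj _ _ (hσ i (Perm.mem_support.mp hi)).symm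
  rintro x y (rfl | rfl) (rfl | rfl) <;> norm_num

theorem sign_smul_prod_of_mem_twoMatchingPerms (hS : G.IsSkewAdjMatrix S) {σ : Perm V}
    (hσ : σ ∈ G.twoMatchingPerms) : Perm.sign σ • ∏ i ∈ σ.support, S (σ i) i = 1 := by
  obtain ⟨a, b, c, d, h, hab, hcd, rfl⟩ := mem_twoMatchingPerms.mp hσ
  rw [Perm.prod_support_swap_mul_swap h (f := S), hS.apply_comm_mul_apply hab, mul_assoc,
    hS.apply_comm_mul_apply hcd, Perm.sign_mul, Perm.sign_swap hab.ne, Perm.sign_swap hcd.ne]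
  norm_num

theorem sign_smul_prod_of_mem_quadranglePerms {σ : Perm V} (hσ : σ ∈ G.quadranglePerms) :
    Perm.sign σ • ∏ i ∈ σ.support, S (σ i) i = -∏ i ∈ σ.support, S (σ i) i := by
  obtain ⟨h4, hcyc, -⟩ := mem_quadranglePerms.mp hσ
  rw [hcyc.sign, h4, show -(-1 : ℤˣ) ^ 4 = -1 by decide, Units.neg_smul, one_smul]

theorem neg_one_pow_four_mul_charpoly_coeff (hS : G.IsSkewAdjMatrix S)
    (hV : 4 ≤ Fintype.card V) :
    (-1) ^ 4 * S.charpoly.coeff (Fintype.card V - 4) =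
      #G.twoMatchingPerms - ∑ σ ∈ G.quadranglePerms, ∏ i ∈ σ.support, S (σ i) i := by
  classical
  rw [neg_one_pow_mul_charpoly_coeff_of_diag_eq_zero hS.apply_self hV,
    ← sum_filter_of_ne (p := G.MovesAlongEdges) fun σ _ h =>
      hS.movesAlongEdges_of_prod_ne_zero fun h0 => h (by rw [h0, smul_zero]),
    ← sum_filter_add_sum_filter_not _ Perm.IsCycle]
  have hquad : (({σ : Perm V | #σ.support = 4} : Finset _).filter G.MovesAlongEdges).filter
      Perm.IsCycle = G.quadranglePerms := by
    ext σ
    simp only [mem_filter, mem_univ, true_and, quadranglePerms]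
    tauto
  have hmatch : (({σ : Perm V | #σ.support = 4} : Finset _).filter G.MovesAlongEdges).filter
      (¬·.IsCycle) = G.twoMatchingPerms := by
    ext σ
    simp only [mem_filter, mem_univ, true_and, twoMatchingPerms]
    tauto
  rw [hquad, hmatch, sum_congr rfl fun σ => sign_smul_prod_of_mem_quadranglePerms,
    sum_congr rfl fun σ => hS.sign_smul_prod_of_mem_twoMatchingPerms, sum_neg_distrib, sum_const,
    nsmul_one, neg_add_eq_sub]

theorem prod_support_formPerm_four (hS : G.IsSkewAdjMatrix S) {a b c d : V}
    (h : [a, b, c, d].Nodup) :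
    ∏ i ∈ [a, b, c, d].formPerm.support, S ([a, b, c, d].formPerm i) i =
      S a b * S b c * S c d * S d a := by
  rw [Perm.prod_support_formPerm_four h (f := S), hS.apply_comm b a, hS.apply_comm c b,
    hS.apply_comm d c, hS.apply_comm a d]
  ring

theorem forall_mem_quadranglePerms_prod_eq_one_iff (hS : G.IsSkewAdjMatrix S) :
    (∀ σ ∈ G.quadranglePerms, ∏ i ∈ σ.support, S (σ i) i = 1) ↔
      ∀ a b c d, G.IsQuadrangle a b c d → S a b * S b c * S c d * S d a = 1 := by
  constructor
  · intro h a b c d hq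
    rw [← hS.prod_support_formPerm_four hq.1]
    exact h _ (formPerm_mem_quadranglePerms hq)
  · intro h σ hσ
    obtain ⟨h4, hcyc, -⟩ := mem_quadranglePerms.mp hσ
    obtain ⟨x, hx⟩ := card_pos.mp (by omega : 0 < #σ.support)
    have hq := isQuadrangle_of_mem_quadranglePerms hσ hx
    have hprod := hS.prod_support_formPerm_four hq.1
    rw [← (hcyc.eq_formPerm_of_card_support_eq_four h4 hx).2] at hprod
    rw [hprod]
    exact h _ _ _ _ hq

end SimpleGraph.IsSkewAdjMatrix

namespace SimpleGraph

variable {n : ℕ} (G : SimpleGraph (Fin n))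

theorem card_twoMatchingPerms_eq_twoMatchingCount :
    #G.twoMatchingPerms = twoMatchingCount G := by
  rw [card_twoMatchingPerms, twoMatchings, twoMatchingCount]
  congr

theorem card_quadranglePerms_eq_two_mul_quadCount :
    #G.quadranglePerms = 2 * quadCount G := by
  classical
  obtain ⟨k, hk⟩ := G.two_dvd_card_quadranglePerms
  have hq : quadCount G =
      #{p : Fin n × Fin n × Fin n × Fin n | G.IsQuadrangle p.1 p.2.1 p.2.2.1 p.2.2.2} / 8 := by
    unfold quadCount
    congr 2
    ext p
    simp [IsQuadrangle, and_assoc]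
  rw [hq, card_isQuadrangle, hk]
  omega

end SimpleGraph

theorem skew_charpoly_a4_lower_bound_general
    {n : ℕ} (hn : 4 ≤ n) (G : SimpleGraph (Fin n))
    (S : Matrix (Fin n) (Fin n) ℝ)
    (hskew : Sᵀ = -S)
    (horient : ∀ i j, G.Adj i j → S i j = 1 ∨ S i j = -1)
    (hzero : ∀ i j, ¬ G.Adj i j → S i j = 0) :
    (twoMatchingCount G : ℝ) - 2 * (quadCount G : ℝ) ≤
      (-1 : ℝ) ^ 4 * S.charpoly.coeff (n - 4) ∧
    ((-1 : ℝ) ^ 4 * S.charpoly.coeff (n - 4) =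
        (twoMatchingCount G : ℝ) - 2 * (quadCount G : ℝ) ↔
      ∀ a b c d : Fin n, a ≠ b → a ≠ c → a ≠ d → b ≠ c → b ≠ d → c ≠ d →
        G.Adj a b → G.Adj b c → G.Adj c d → G.Adj d a →
        S a b * S b c * S c d * S d a = 1) := by
  have hS : G.IsSkewAdjMatrix S := ⟨hskew, horient, hzero⟩
  have hcoeff := hS.neg_one_pow_four_mul_charpoly_coeff (by simpa using hn)
  have hquad : 2 * (quadCount G : ℝ) = #G.quadranglePerms := by
    exact_mod_cast (G.card_quadranglePerms_eq_two_mul_quadCount).symm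
  have hle : ∀ σ ∈ G.quadranglePerms, ∏ i ∈ σ.support, S (σ i) i ≤ 1 := fun σ hσ => by
    rcases hS.prod_eq_one_or_neg_one (SimpleGraph.mem_quadranglePerms.mp hσ).2.2 with h | h <;>
      norm_num [h]
  rw [Fintype.card_fin, G.card_twoMatchingPerms_eq_twoMatchingCount] at hcoeff
  rw [hcoeff, hquad]
  have hsum := sum_le_card_nsmul _ _ _ hle
  have hiff := sum_eq_sum_iff_of_le hle
  simp only [sum_const, nsmul_eq_mul, mul_one] at hsum hiff
  refine ⟨by linarith, ?_⟩
  rw [sub_right_inj, hiff, hS.forall_mem_quadranglePerms_prod_eq_one_iff]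
  simp only [SimpleGraph.IsQuadrangle, List.nodup_four_iff, and_imp]

/-- For an oriented graph `G^σ` on `n` vertices with skew characteristic polynomial
`∑ (-1)^i a_i λ^{n-i}`, one has `a_4 ≥ M(G,2) - 2q(G)`, with equality iff every
quadrangle of `G` is evenly oriented (i.e. the product of the skew-adjacency entries
around the quadrangle equals `1`). -/
theorem skew_charpoly_a4_lower_bound
    {n : ℕ} (hn : 4 ≤ n) (G : SimpleGraph (Fin n)) [DecidableRel G.Adj]
    (S : Matrix (Fin n) (Fin n) ℝ)
    (hskew : Sᵀ = -S)
    (horient : ∀ i j, G.Adj i j → S i j = 1 ∨ S i j = -1)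
    (hzero : ∀ i j, ¬ G.Adj i j → S i j = 0) :
    (twoMatchingCount G : ℝ) - 2 * (quadCount G : ℝ) ≤
      (-1 : ℝ) ^ 4 * S.charpoly.coeff (n - 4) ∧
    ((-1 : ℝ) ^ 4 * S.charpoly.coeff (n - 4) =
        (twoMatchingCount G : ℝ) - 2 * (quadCount G : ℝ) ↔
      ∀ a b c d : Fin n, a ≠ b → a ≠ c → a ≠ d → b ≠ c → b ≠ d → c ≠ d →
        G.Adj a b → G.Adj b c → G.Adj c d → G.Adj d a →
        S a b * S b c * S c d * S d a = 1) :=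
  skew_charpoly_a4_lower_bound_general hn G S hskew horient hzero
end

section
/- Let G^σ be an oriented graph with an arc e = (u,v) that is not contained in any even cycle of the underlying graph. Then the skew characteristic polynomials satisfy φ(G^σ, λ) = φ(G^σ - e, λ) + φ(G^σ - u - v, λ). -/
/-!
Let `A = λI - S'`, where `S'` is `S` with the entries at `(u,v)` and `(v,u)` cleared. The
characteristic matrix `λI - S` differs from `A` only in rows `u` and `v` (by `-e_v` and `+e_u`),
so expanding its determinant multilinearly in these two rows gives
`φ(S) = φ(S') - adj(A)_{vu} + adj(A)_{uv} + φ(S - u - v)`.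
A permutation `σ` with `σ u = v` contributes to `adj(A)_{uv}` only if its cycle through `u`
returns from `v` to `u` along edges of `G - e`; together with `e` this is a cycle of `G` through
`e`, hence of odd length. Reversing that cycle is a sign-preserving bijection onto the
permutations contributing to `adj(A)_{vu}`, and since `S'` is skew-symmetric it changes the
weight by `(-1)^(length - 1) = 1`. So the two adjugate entries cancel.
-/

open Matrix Polynomial Equiv Equiv.Perm Finset

namespace Equiv.Perm

variable {α : Type*} [DecidableEq α] [Fintype α]

theorem toList_eq_map_range (σ : Perm α) (u : α) :
    σ.toList u = (List.range #(σ.cycleOf u).support).map fun k => (σ ^ k) u := by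
  simp [toList, ← List.range_map_iterate, iterate_eq_pow]

theorem pow_card_support_cycleOf_apply (σ : Perm α) (u : α) :
    (σ ^ #(σ.cycleOf u).support) u = u := by
  by_cases hu : σ u = u
  · exact pow_apply_eq_self_of_apply_eq_self hu _
  · rw [← cycleOf_pow_apply_self, ← (isCycle_cycleOf σ hu).orderOf, pow_orderOf_eq_one]
    rfl

theorem isChain_toList_append_singleton {r : α → α → Prop} (σ : Perm α) (u : α)
    (hr : ∀ x, σ.SameCycle u x → r x (σ x)) : (σ.toList u ++ [u]).IsChain r := by
  have hmap : σ.toList u ++ [u] =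
      (List.range (#(σ.cycleOf u).support + 1)).map fun k => (σ ^ k) u := by
    rw [List.range_succ, List.map_append, toList_eq_map_range]
    simp [pow_card_support_cycleOf_apply]
  rw [hmap, List.isChain_map, List.isChain_range_succ]
  intro m _
  rw [pow_succ', mul_apply]
  exact hr _ ⟨m, by simp⟩

-- With `c = σ.cycleOf u`, `σ = (σ * c⁻¹) * c` is a disjoint product; this replaces `c` by
-- `c⁻¹`.
def reverseCycleOf (σ : Perm α) (u : α) : Perm α :=
  σ * (σ.cycleOf u)⁻¹ * (σ.cycleOf u)⁻¹

theorem inv_cycleOf_apply_of_sameCycle {σ : Perm α} {u x : α} (h : σ.SameCycle u x) :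
    (σ.cycleOf u)⁻¹ x = σ⁻¹ x := by
  rw [cycleOf_inv, (sameCycle_inv.2 h).cycleOf_apply]

theorem reverseCycleOf_apply_of_sameCycle {σ : Perm α} {u x : α} (h : σ.SameCycle u x) :
    σ.reverseCycleOf u x = σ⁻¹ x := by
  have h' : σ.SameCycle u (σ⁻¹ x) := sameCycle_symm_apply_right.2 h
  rw [reverseCycleOf, mul_apply, mul_apply, inv_cycleOf_apply_of_sameCycle h,
    inv_cycleOf_apply_of_sameCycle h']
  exact σ.apply_symm_apply _

theorem reverseCycleOf_apply_of_not_sameCycle {σ : Perm α} {u x : α} (h : ¬σ.SameCycle u x) :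
    σ.reverseCycleOf u x = σ x := by
  have hx : (σ.cycleOf u)⁻¹ x = x := by
    rw [inv_eq_iff_eq, cycleOf_apply_of_not_sameCycle h]
  rw [reverseCycleOf, mul_apply, mul_apply, hx, hx]

theorem cycleOf_reverseCycleOf (σ : Perm α) (u : α) :
    (σ.reverseCycleOf u).cycleOf u = (σ.cycleOf u)⁻¹ := by
  by_cases hu : σ u = u
  · simp [reverseCycleOf, (cycleOf_eq_one_iff σ).2 hu]
  have hc : (σ.cycleOf u)⁻¹ u ≠ u := by
    rw [Ne, inv_eq_iff_eq, cycleOf_apply_self]; exact Ne.symm hu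
  have hd : Disjoint (σ * (σ.cycleOf u)⁻¹) (σ.cycleOf u)⁻¹ :=
    (disjoint_mul_inv_of_mem_cycleFactorsFinset
      (cycleOf_mem_cycleFactorsFinset_iff.2 (mem_support.2 hu))).inv_right
  have hfix : (σ * (σ.cycleOf u)⁻¹) u = u := (hd u).resolve_right hc
  rw [reverseCycleOf, hd.cycleOf_mul_distrib, (cycleOf_eq_one_iff _).2 hfix, one_mul,
    ((isCycle_cycleOf σ hu).inv).cycleOf_eq hc]

theorem reverseCycleOf_reverseCycleOf (σ : Perm α) (u : α) :
    (σ.reverseCycleOf u).reverseCycleOf u = σ := by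
  conv_lhs => rw [reverseCycleOf, cycleOf_reverseCycleOf, reverseCycleOf]
  group

theorem sign_reverseCycleOf (σ : Perm α) (u : α) : sign (σ.reverseCycleOf u) = sign σ := by
  simp [reverseCycleOf, mul_assoc, Int.units_mul_self]

end Equiv.Perm

namespace SimpleGraph

variable {V : Type*} {G : SimpleGraph V}

theorem Walk.exists_support_eq {a b : V} {l : List V} (hchain : (a :: l).IsChain G.Adj)
    (hb : (a :: l).getLast (List.cons_ne_nil a l) = b) :
    ∃ p : G.Walk a b, p.support = a :: l :=
  ⟨(Walk.ofSupport _ _ hchain).copy rfl hb,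
    (Walk.support_copy _ _ _).trans (Walk.support_ofSupport _ _)⟩

variable [DecidableEq V] [Fintype V]

theorem exists_isCycle_of_cycleOf (σ : Perm V) (u : V) (hcard : 3 ≤ #(σ.cycleOf u).support)
    (hadj : ∀ x, σ.SameCycle u x → G.Adj x (σ x)) :
    ∃ c : G.Walk u u, c.IsCycle ∧ c.length = #(σ.cycleOf u).support ∧
      s(u, σ u) ∈ c.edges := by
  obtain ⟨t, ht⟩ : ∃ t, σ.toList u = u :: σ u :: t := by
    obtain ⟨M, hM⟩ := Nat.exists_eq_add_of_le' (hcard.trans' (by norm_num) : 2 ≤ _)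
    rw [toList_eq_map_range, hM]
    simp [List.range_succ_eq_map]
  have hchain := isChain_toList_append_singleton σ u hadj
  have hnodup := nodup_toList σ u
  have hlen := length_toList σ u
  rw [ht] at hnodup hlen
  rw [ht, List.cons_append, List.cons_append] at hchain
  obtain ⟨p, hp⟩ := Walk.exists_support_eq (b := u) hchain.of_cons (by simp)
  have hpath : p.IsPath := by
    rw [Walk.isPath_def, hp, ← List.cons_append]
    exact (List.perm_append_singleton _ _).nodup_iff.2 hnodup
  have hplen : p.length = t.length + 1 := by
    simpa [hp] using p.length_support.symm
  simp only [List.length_cons] at hlen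
  refine ⟨Walk.cons (hadj u (SameCycle.refl σ u)) p, ?_, by simp [hplen, ← hlen], by simp⟩
  exact Walk.isCycle_iff_isPath_tail_and_le_length.2
    ⟨by simpa using hpath, by rw [Walk.length_cons, hplen]; omega⟩

theorem odd_card_support_cycleOf {u v : V} (huv : G.Adj u v)
    (hnocycle : ∀ (w : V) (c : G.Walk w w), c.IsCycle → Even c.length → s(u, v) ∉ c.edges)
    {σ : Perm V} (hσ : σ u = v) (hσv : σ v ≠ u)
    (hadj : ∀ x, σ.SameCycle u x → x ≠ u → G.Adj x (σ x)) :
    Odd #(σ.cycleOf u).support := by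
  have htwo : 2 ≤ #(σ.cycleOf u).support :=
    two_le_card_support_cycleOf_iff.2 (hσ ▸ G.ne_of_adj huv |>.symm)
  have hne_two : #(σ.cycleOf u).support ≠ 2 := by
    intro h
    have := pow_card_support_cycleOf_apply σ u
    rw [h, pow_two, mul_apply, hσ] at this
    exact hσv this
  have hadj' : ∀ x, σ.SameCycle u x → G.Adj x (σ x) := fun x hx => by
    by_cases hxu : x = u
    · exact hxu ▸ hσ ▸ huv
    · exact hadj x hx hxu
  obtain ⟨c, hc, hlen, hedge⟩ := exists_isCycle_of_cycleOf σ u (by omega) hadj'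
  rw [← Nat.not_even_iff_odd, ← hlen]
  exact fun heven => hnocycle u c hc heven (hσ ▸ hedge)

end SimpleGraph

namespace Finset

theorem prod_univ_erase_eq_prod_erase_mul_prod_compl {ι M : Type*} [DecidableEq ι] [Fintype ι]
    [CommMonoid M] (f : ι → M) {s : Finset ι} {a : ι} (ha : a ∈ s) :
    ∏ i ∈ univ.erase a, f i = (∏ i ∈ s.erase a, f i) * ∏ i ∈ sᶜ, f i := by
  rw [← prod_union (disjoint_compl_right.mono_left (erase_subset a s))]
  congr 1
  ext x
  by_cases hx : x ∈ s <;> simp [hx]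
  rintro rfl
  exact hx ha

end Finset

namespace Matrix

variable {n R : Type*} [DecidableEq n] [CommRing R]

def deleteArc (M : Matrix n n R) (u v : n) : Matrix n n R :=
  of fun i j => if (i = u ∧ j = v) ∨ (i = v ∧ j = u) then 0 else M i j

theorem deleteArc_apply_swap_of_skew {M : Matrix n n R} (hM : ∀ i j, M j i = -M i j)
    (u v i j : n) :
    M.deleteArc u v j i = -M.deleteArc u v i j := by
  simp only [deleteArc, of_apply]
  split_ifs <;> first | tauto | simp

variable [Fintype n]

theorem adjugate_apply_eq_sum (A : Matrix n n R) (i j : n) :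
    adjugate A i j =
      ∑ σ : Perm n with σ i = j, sign σ • ∏ k ∈ univ.erase i, A (σ k) k := by
  rw [adjugate_apply, det_apply,
    ← sum_filter_add_sum_filter_not univ (fun σ : Perm n => σ i = j),
    sum_eq_zero (s := {σ : Perm n | ¬σ i = j}), add_zero]
  · refine sum_congr rfl fun σ hσ => ?_
    rw [mem_filter] at hσ
    rw [← mul_prod_erase univ _ (mem_univ i), hσ.2, updateRow_self, Pi.single_eq_same, one_mul]
    congr 1
    refine prod_congr rfl fun k hk => ?_
    rw [updateRow_ne (hσ.2 ▸ σ.injective.ne (ne_of_mem_erase hk))]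
  · intro σ hσ
    rw [mem_filter] at hσ
    refine smul_eq_zero_of_right _ (prod_eq_zero (mem_univ (σ⁻¹ j)) ?_)
    simp [symm_apply_eq, Ne.symm hσ.2]

theorem sign_smul_prod_reverseCycleOf (A : Matrix n n R) (hA : ∀ i j, i ≠ j → A j i = -A i j)
    {σ : Perm n} {u v : n} (huv : u ≠ v) (hσ : σ u = v)
    (hodd : (∀ j ∈ (σ.cycleOf u).support.erase u, A (σ j) j ≠ 0) →
      Odd #(σ.cycleOf u).support) :
    sign (σ.reverseCycleOf u) • ∏ i ∈ univ.erase v, A (σ.reverseCycleOf u i) i =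
      sign σ • ∏ i ∈ univ.erase u, A (σ i) i := by
  set Z := (σ.cycleOf u).support
  have hu : σ u ≠ u := hσ ▸ huv.symm
  have hZ : ∀ x, x ∈ Z ↔ σ.SameCycle u x := fun x => mem_support_cycleOf_iff' hu
  have huZ : u ∈ Z := (hZ u).2 (SameCycle.refl σ u)
  have hvZ : v ∈ Z := (hZ v).2 ⟨1, by simp [hσ]⟩
  have hinner :
      ∏ i ∈ Z.erase v, A (σ.reverseCycleOf u i) i = ∏ j ∈ Z.erase u, A j (σ j) := by
    symm
    refine prod_equiv σ (fun j => ?_) fun j hj => ?_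
    · simp only [mem_erase, hZ, sameCycle_apply_right, ← hσ, σ.injective.ne_iff]
    · have hj' := sameCycle_apply_right.2 ((hZ j).1 (mem_of_mem_erase hj))
      rw [reverseCycleOf_apply_of_sameCycle hj']
      simp
  have houter : ∏ i ∈ Zᶜ, A (σ.reverseCycleOf u i) i = ∏ i ∈ Zᶜ, A (σ i) i :=
    prod_congr rfl fun i hi => by
      rw [reverseCycleOf_apply_of_not_sameCycle (by simpa [hZ] using hi)]
  have hflip :
      ∏ j ∈ Z.erase u, A j (σ j) = (-1) ^ #(Z.erase u) * ∏ j ∈ Z.erase u, A (σ j) j := by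
    rw [← prod_neg]
    refine prod_congr rfl fun j hj => hA _ _ ?_
    exact ((hZ j).1 (mem_of_mem_erase hj)).apply_eq_self_iff.not.1 hu
  rw [prod_univ_erase_eq_prod_erase_mul_prod_compl _ hvZ,
    prod_univ_erase_eq_prod_erase_mul_prod_compl _ huZ, hinner, houter, hflip, sign_reverseCycleOf]
  by_cases hall : ∀ j ∈ Z.erase u, A (σ j) j ≠ 0
  · obtain ⟨k, hk⟩ := hodd hall
    rw [card_erase_of_mem huZ, hk, Nat.add_sub_cancel, pow_mul, neg_one_sq, one_pow, one_mul]
  · push Not at hall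
    obtain ⟨j, hj, hzero⟩ := hall
    rw [prod_eq_zero (f := fun j => A (σ j) j) hj hzero, mul_zero, zero_mul]

theorem adjugate_apply_comm_of_odd_cycleOf (A : Matrix n n R)
    (hA : ∀ i j, i ≠ j → A j i = -A i j) {u v : n} (huv : u ≠ v)
    (hodd : ∀ σ : Perm n, σ u = v →
      (∀ j ∈ (σ.cycleOf u).support.erase u, A (σ j) j ≠ 0) →
      Odd #(σ.cycleOf u).support) :
    adjugate A v u = adjugate A u v := by
  have hmaps : ∀ τ : Perm n, τ v = u → τ.reverseCycleOf u u = v := fun τ hτ => by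
    rw [reverseCycleOf_apply_of_sameCycle (SameCycle.refl τ u), inv_eq_iff_eq, hτ]
  have hmaps' : ∀ σ : Perm n, σ u = v → σ.reverseCycleOf u v = u := fun σ hσ => by
    rw [reverseCycleOf_apply_of_sameCycle ⟨1, by simp [hσ]⟩, inv_eq_iff_eq, hσ]
  rw [adjugate_apply_eq_sum, adjugate_apply_eq_sum]
  refine sum_nbij' (reverseCycleOf · u) (reverseCycleOf · u) ?_ ?_
    (fun τ _ => reverseCycleOf_reverseCycleOf τ u)
    (fun σ _ => reverseCycleOf_reverseCycleOf σ u) fun τ hτ => ?_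
  · simpa only [mem_filter, mem_univ, true_and] using hmaps
  · simpa only [mem_filter, mem_univ, true_and] using hmaps'
  · have hσ := hmaps τ (mem_filter.1 hτ).2
    simpa only [reverseCycleOf_reverseCycleOf] using
      sign_smul_prod_reverseCycleOf A hA huv hσ (hodd _ hσ)

theorem det_updateRow_add_updateRow_add (A : Matrix n n R) {u v : n} (huv : u ≠ v)
    (x y : n → R) :
    ((A.updateRow u (A u + x)).updateRow v (A v + y)).det =
      A.det + (A.updateRow u x).det + (A.updateRow v y).det +
        ((A.updateRow u x).updateRow v y).det := by
  have hv : (A.updateRow u (A u + x)) v = A v := updateRow_ne huv.symm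
  have hu : (A.updateRow v y) u = A u := updateRow_ne huv
  rw [det_updateRow_add, ← hv, updateRow_eq_self, det_updateRow_add, updateRow_eq_self,
    updateRow_comm _ huv, det_updateRow_add, ← hu, updateRow_eq_self, updateRow_comm _ huv.symm]
  ring

theorem charmatrix_submatrix {m : Type*} [DecidableEq m] [Fintype m] (M : Matrix n n R)
    {f : m → n} (hf : Function.Injective f) :
    (M.submatrix f f).charmatrix = M.charmatrix.submatrix f f := by
  ext i j
  by_cases hij : i = j
  · subst hij; simp [charmatrix_apply_eq]
  · simp [charmatrix_apply_ne _ _ _ hij, charmatrix_apply_ne _ _ _ (hf.ne hij)]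

theorem det_updateRow_single_updateRow_single (A : Matrix n n R) {u v : n} (huv : u ≠ v)
    (c d : R) :
    ((A.updateRow u (Pi.single v c)).updateRow v (Pi.single u d)).det =
      -(c * d) * (A.submatrix (fun i : {x : n // x ≠ u ∧ x ≠ v} => (i : n))
        (fun j : {x : n // x ≠ u ∧ x ≠ v} => (j : n))).det := by
  set B := (A.updateRow u (Pi.single v c)).updateRow v (Pi.single u d)
  set p : n → Prop := fun x => x ≠ u ∧ x ≠ v
  have hBu : B u = Pi.single v c := by simp [B, updateRow_ne huv]
  have hBv : B v = Pi.single u d := by simp [B]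
  have hB : ∀ i, p i → B i = A i := fun i hi => by
    simp [B, updateRow_ne hi.1, updateRow_ne hi.2]
  have hpair : ∀ x, ¬p x ↔ x = u ∨ x = v := fun x => by simp only [p]; tauto
  have h21 : (B.submatrix (sumCompl p) (sumCompl p)).toBlocks₂₁ = 0 := by
    ext ⟨i, hi⟩ ⟨j, hj⟩
    rcases (hpair i).1 hi with rfl | rfl
    · simp [toBlocks₂₁, hBu, hj.2]
    · simp [toBlocks₂₁, hBv, hj.1]
  rw [← det_submatrix_equiv_self (sumCompl p), ← fromBlocks_toBlocks (B.submatrix _ _), h21,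
    det_fromBlocks_zero₂₁, mul_comm]
  congr 1
  · let e : Fin 2 ≃ {x // ¬p x} :=
      Equiv.ofBijective ![⟨u, by simp [p]⟩, ⟨v, by simp [p]⟩] ⟨by
        intro i j h
        fin_cases i <;> fin_cases j <;> simp_all [Subtype.ext_iff, huv.symm], by
        rintro ⟨x, hx⟩
        rcases (hpair x).1 hx with rfl | rfl
        exacts [⟨0, rfl⟩, ⟨1, rfl⟩]⟩
    have e0 : (e 0 : n) = u := rfl
    have e1 : (e 1 : n) = v := rfl
    rw [← det_submatrix_equiv_self e, det_fin_two]
    simp [toBlocks₂₂, e0, e1, hBu, hBv, huv, huv.symm]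
  · congr 1
    ext i j
    simp [toBlocks₁₁, hB _ i.2]

theorem charmatrix_apply_swap_of_skew {M : Matrix n n R} (hM : ∀ i j, M j i = -M i j) {i j : n}
    (hij : i ≠ j) : charmatrix M j i = -charmatrix M i j := by
  simp [charmatrix_apply_ne _ _ _ hij, charmatrix_apply_ne _ _ _ hij.symm, hM i j]

theorem charmatrix_eq_updateRow_updateRow_deleteArc (M : Matrix n n R) {u v : n} (huv : u ≠ v) :
    charmatrix M =
      ((charmatrix (M.deleteArc u v)).updateRow u
          (charmatrix (M.deleteArc u v) u + Pi.single v (-C (M u v)))).updateRow v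
        (charmatrix (M.deleteArc u v) v + Pi.single u (-C (M v u))) := by
  refine Matrix.ext fun i j => ?_
  simp only [charmatrix_apply, deleteArc, updateRow_apply, of_apply, Pi.add_apply, Pi.single_apply]
  split_ifs <;> simp_all [sub_eq_add_neg]

theorem charpoly_eq_charpoly_deleteArc_add {M : Matrix n n R} {u v : n} (huv : u ≠ v)
    (hvu : M v u = -M u v)
    (hadj : adjugate (charmatrix (M.deleteArc u v)) v u =
      adjugate (charmatrix (M.deleteArc u v)) u v) :
    M.charpoly = (M.deleteArc u v).charpoly +
      C (M u v ^ 2) * (M.submatrix (fun i : {x : n // x ≠ u ∧ x ≠ v} => (i : n))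
        (fun j : {x : n // x ≠ u ∧ x ≠ v} => (j : n))).charpoly := by
  have hminor : (M.deleteArc u v).submatrix (fun i : {x : n // x ≠ u ∧ x ≠ v} => (i : n))
      (fun j : {x : n // x ≠ u ∧ x ≠ v} => (j : n)) =
      M.submatrix (fun i : {x : n // x ≠ u ∧ x ≠ v} => (i : n))
        (fun j : {x : n // x ≠ u ∧ x ≠ v} => (j : n)) := by
    ext i j
    simp [deleteArc, i.2.1, i.2.2]
  have hsingle : ∀ (w : n) (a : R[X]), (Pi.single w a : n → R[X]) = a • Pi.single w 1 :=
    fun w a => by rw [← Pi.single_smul', smul_eq_mul, mul_one]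
  rw [charpoly, charmatrix_eq_updateRow_updateRow_deleteArc M huv,
    det_updateRow_add_updateRow_add _ huv, det_updateRow_single_updateRow_single _ huv,
    charpoly, charpoly, ← hminor, charmatrix_submatrix _ Subtype.val_injective,
    hsingle v, hsingle u, det_updateRow_smul, det_updateRow_smul,
    ← adjugate_apply, ← adjugate_apply, hadj, hvu]
  simp only [map_neg, map_pow]
  ring

end Matrix

theorem SimpleGraph.odd_card_support_cycleOf_of_charmatrix_deleteArc
    {V R : Type*} [DecidableEq V] [Fintype V] [CommRing R] {G : SimpleGraph V}
    {S : Matrix V V R} (hzero : ∀ i j, ¬G.Adj i j → S i j = 0) {u v : V} (huv : G.Adj u v)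
    (hnocycle : ∀ (w : V) (c : G.Walk w w), c.IsCycle → Even c.length → s(u, v) ∉ c.edges)
    {σ : Perm V} (hσ : σ u = v)
    (hA : ∀ j ∈ (σ.cycleOf u).support.erase u, charmatrix (S.deleteArc u v) (σ j) j ≠ 0) :
    Odd #(σ.cycleOf u).support := by
  have hne : u ≠ v := G.ne_of_adj huv
  have hu : σ u ≠ u := hσ ▸ hne.symm
  have hmem : ∀ x, σ.SameCycle u x → x ≠ u → x ∈ (σ.cycleOf u).support.erase u :=
    fun x hx hxu => mem_erase.2 ⟨hxu, (mem_support_cycleOf_iff' hu).2 hx⟩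
  refine G.odd_card_support_cycleOf huv hnocycle hσ (fun hσv => ?_) fun x hx hxu => ?_
  · refine hA v (hmem v ⟨1, by simp [hσ]⟩ hne.symm) ?_
    simp [hσv, charmatrix_apply_ne _ _ _ hne, deleteArc]
  · have hσx : σ x ≠ x := (hx.apply_eq_self_iff.not).1 hu
    by_contra hnadj
    refine hA x (hmem x hx hxu) ?_
    simp [charmatrix_apply_ne _ _ _ hσx, deleteArc, hzero _ _ (fun h => hnadj h.symm)]

theorem skew_charpoly_arc_deletion_general
    {n : ℕ} (G : SimpleGraph (Fin n))
    (S : Matrix (Fin n) (Fin n) ℝ)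
    (hskew : Sᵀ = -S)
    (hzero : ∀ i j, ¬ G.Adj i j → S i j = 0)
    (u v : Fin n) (huv : G.Adj u v) (harc : S u v = 1)
    (hnocycle : ∀ (w : Fin n) (c : G.Walk w w), c.IsCycle → Even c.length →
      s(u, v) ∉ c.edges) :
    S.charpoly =
      (Matrix.of (fun i j : Fin n =>
          if (i = u ∧ j = v) ∨ (i = v ∧ j = u) then 0 else S i j)).charpoly +
      (S.submatrix (fun i : {x : Fin n // x ≠ u ∧ x ≠ v} => (i : Fin n))
          (fun j : {x : Fin n // x ≠ u ∧ x ≠ v} => (j : Fin n))).charpoly := by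
  have hne : u ≠ v := G.ne_of_adj huv
  have hS : ∀ i j, S j i = -S i j := fun i j => by simpa using congr_fun₂ hskew i j
  have hadjugate := adjugate_apply_comm_of_odd_cycleOf _
    (fun _ _ => charmatrix_apply_swap_of_skew (deleteArc_apply_swap_of_skew hS u v)) hne
    fun σ hσ hA => G.odd_card_support_cycleOf_of_charmatrix_deleteArc hzero huv hnocycle hσ hA
  have h := charpoly_eq_charpoly_deleteArc_add hne (hS u v) hadjugate
  rwa [harc, one_pow, map_one, one_mul] at h

/-- Let `G^σ` be an oriented graph with skew-adjacency matrix `S`, and let `e = (u,v)`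
be an arc that lies on no even cycle of the underlying graph `G`.  Then
`φ(G^σ, λ) = φ(G^σ - e, λ) + φ(G^σ - u - v, λ)`, where `G^σ - e` has the skew-adjacency
matrix obtained by zeroing the `(u,v)` and `(v,u)` entries of `S`, and `G^σ - u - v`
has the principal submatrix of `S` on the vertices other than `u` and `v`. -/
theorem skew_charpoly_arc_deletion
    {n : ℕ} (G : SimpleGraph (Fin n)) [DecidableRel G.Adj]
    (S : Matrix (Fin n) (Fin n) ℝ)
    (hskew : Sᵀ = -S)
    (horient : ∀ i j, G.Adj i j → S i j = 1 ∨ S i j = -1)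
    (hzero : ∀ i j, ¬ G.Adj i j → S i j = 0)
    (u v : Fin n) (huv : G.Adj u v) (harc : S u v = 1)
    (hnocycle : ∀ (w : Fin n) (c : G.Walk w w), c.IsCycle → Even c.length →
      s(u, v) ∉ c.edges) :
    S.charpoly =
      (Matrix.of (fun i j : Fin n =>
          if (i = u ∧ j = v) ∨ (i = v ∧ j = u) then 0 else S i j)).charpoly +
      (S.submatrix (fun i : {x : Fin n // x ≠ u ∧ x ≠ v} => (i : Fin n))
          (fun j : {x : Fin n // x ≠ u ∧ x ≠ v} => (j : Fin n))).charpoly :=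
  skew_charpoly_arc_deletion_general G S hskew hzero u v huv harc hnocycle
end

section
/- Let O^+_{n,m} be the oriented graph obtained from a star on n vertices with center v₁ (all arcs directed away from v₁) by adding m-n+1 arcs all with head v₂, a fixed leaf. Its skew characteristic polynomial is λⁿ + m·λ^{n-2} + (m-n+1)(2n-m-3)·λ^{n-4}. -/
/-!
The skew-adjacency matrix of `O⁺_{n,m}` has rank four: with `u = e_{v₁}`, `v` the indicator of the
leaves, `z = e_{v₂}` and `w` the indicator of the tails of the extra arcs, it equals
`u vᵀ - v uᵀ + w zᵀ - z wᵀ = Aᵀ B` for two `4 × n` matrices `A`, `B`. Hence its characteristic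
polynomial is `λ^{n-4}` times that of the `4 × 4` matrix `B Aᵀ`, whose entries are the inner products
of `u, v, w, z`, i.e. cardinalities of intersections of intervals of vertices.
-/

open Matrix Polynomial

/-- The skew-adjacency matrix of the oriented graph `O⁺_{n,m}`: the star with center
`v₁ = 0` and all arcs directed away from `v₁`, together with `m - n + 1` further arcs
with tails `2, …, m-n+2` and common head `v₂ = 1`. -/
def skewO (n m : ℕ) : Matrix (Fin n) (Fin n) ℝ :=
  Matrix.of fun i j =>
    if (i : ℕ) = 0 ∧ (j : ℕ) ≠ 0 then 1
    else if (j : ℕ) = 0 ∧ (i : ℕ) ≠ 0 then -1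
    else if (j : ℕ) = 1 ∧ 2 ≤ (i : ℕ) ∧ (i : ℕ) ≤ m - n + 2 then 1
    else if (i : ℕ) = 1 ∧ 2 ≤ (j : ℕ) ∧ (j : ℕ) ≤ m - n + 2 then -1
    else 0

theorem charpoly_vecMulVec_sub_vecMulVec_add {ι R : Type*} [Fintype ι] [DecidableEq ι]
    [CommRing R] (hι : 4 ≤ Fintype.card ι) (u v w z : ι → R) :
    (vecMulVec u v - vecMulVec v u + (vecMulVec w z - vecMulVec z w)).charpoly =
      X ^ (Fintype.card ι - 4) *
        (of fun s t => ![v, u, z, w] s ⬝ᵥ ![u, -v, w, -z] t).charpoly := by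
  have hfactor : vecMulVec u v - vecMulVec v u + (vecMulVec w z - vecMulVec z w) =
      (of ![u, -v, w, -z])ᵀ * of ![v, u, z, w] := by
    ext i j
    simp [mul_apply, Fin.sum_univ_four, vecMulVec_apply]
    ring
  rw [hfactor, charpoly_mul_comm_of_le _ _ (by simpa using hι), Fintype.card_fin]
  rfl

theorem charpoly_fin_four_skewO_gram {R : Type*} [CommRing R] (a k : R) :
    (!![0, -a, k, -1; 1, 0, 0, 0; 0, -1, 0, -1; 0, -k, k, 0] : Matrix (Fin 4) (Fin 4) R).charpoly =
      X ^ 4 + C (a + k) * X ^ 2 + C (k * (a - k - 1)) := by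
  rw [charpoly, det_succ_row_zero]
  simp [Fin.sum_univ_succ, det_fin_three, charmatrix_apply, Fin.succAbove]
  ring

def icoVec (R : Type*) [Zero R] [One R] (n a b : ℕ) : Fin n → R :=
  fun j => if a ≤ (j : ℕ) ∧ (j : ℕ) < b then 1 else 0

theorem icoVec_dotProduct {R : Type*} [NonAssocSemiring R] {n b d : ℕ} (a c : ℕ) (hb : b ≤ n) :
    icoVec R n a b ⬝ᵥ icoVec R n c d = ((min b d - max a c : ℕ) : R) := by
  have hfilter : (Finset.range n).filter (fun j => (c ≤ j ∧ j < d) ∧ (a ≤ j ∧ j < b)) =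
      Finset.Ico (max a c) (min b d) := by
    ext j
    simp only [Finset.mem_filter, Finset.mem_range, Finset.mem_Ico]
    omega
  simp only [dotProduct, icoVec, ← ite_and, mul_ite, mul_one, mul_zero]
  rw [Fin.sum_univ_eq_sum_range (fun j => if (c ≤ j ∧ j < d) ∧ (a ≤ j ∧ j < b) then (1 : R) else 0),
    Finset.sum_boole, hfilter, Nat.card_Ico]

theorem skewO_eq_vecMulVec (n m : ℕ) :
    skewO n m =
      vecMulVec (icoVec ℝ n 0 1) (icoVec ℝ n 1 n) - vecMulVec (icoVec ℝ n 1 n) (icoVec ℝ n 0 1) +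
        (vecMulVec (icoVec ℝ n 2 (m - n + 3)) (icoVec ℝ n 1 2) -
          vecMulVec (icoVec ℝ n 1 2) (icoVec ℝ n 2 (m - n + 3))) := by
  -- the four kinds of vertices: `v₁`, `v₂`, tails of the extra arcs, remaining leaves
  have classify (k : ℕ) : k = 0 ∨ k = 1 ∨
      (k ≠ 0 ∧ k ≠ 1 ∧ 1 ≤ k ∧ ¬k ≤ 1 ∧ 2 ≤ k ∧ k ≤ m - n + 2 ∧ k < m - n + 3) ∨
      (k ≠ 0 ∧ k ≠ 1 ∧ 1 ≤ k ∧ ¬k ≤ 1 ∧ 2 ≤ k ∧ ¬k ≤ m - n + 2 ∧ ¬k < m - n + 3) := by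
    omega
  ext i j
  have := i.isLt
  have := j.isLt
  rcases classify i with hi | hi | hi | hi <;> rcases classify j with hj | hj | hj | hj <;>
    simp [skewO, icoVec, vecMulVec_apply, hi, hj] <;> omega

theorem skewO_gram {n m : ℕ} (hn : 2 ≤ n) (hm : m - n + 3 ≤ n) :
    (of fun s t =>
        ![icoVec ℝ n 1 n, icoVec ℝ n 0 1, icoVec ℝ n 1 2, icoVec ℝ n 2 (m - n + 3)] s ⬝ᵥ
          ![icoVec ℝ n 0 1, -icoVec ℝ n 1 n, icoVec ℝ n 2 (m - n + 3), -icoVec ℝ n 1 2] t) =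
      !![0, -((n - 1 : ℕ) : ℝ), ((m - n + 1 : ℕ) : ℝ), -1;
         1, 0, 0, 0;
         0, -1, 0, -1;
         0, -((m - n + 1 : ℕ) : ℝ), ((m - n + 1 : ℕ) : ℝ), 0] := by
  ext s t
  fin_cases s <;> fin_cases t <;>
    simp [dotProduct_neg, icoVec_dotProduct, hn, hm, (by omega : 1 ≤ n)]

/-- The skew characteristic polynomial of `O⁺_{n,m}` is
`λⁿ + m λ^{n-2} + (m-n+1)(2n-m-3) λ^{n-4}`. -/
theorem skew_charpoly_O
    {n m : ℕ} (hnm : n ≤ m) (hm2 : m < 2 * (n - 2)) :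
    (skewO n m).charpoly =
      X ^ n + C (m : ℝ) * X ^ (n - 2) +
        C (((m - n + 1) * (2 * n - m - 3) : ℕ) : ℝ) * X ^ (n - 4) := by
  have hsum : ((n - 1 : ℕ) : ℝ) + ((m - n + 1 : ℕ) : ℝ) = m := by
    push_cast [Nat.cast_sub (by omega : 1 ≤ n), Nat.cast_sub hnm]
    ring
  have hprod : ((m - n + 1 : ℕ) : ℝ) * ((n - 1 : ℕ) - (m - n + 1 : ℕ) - 1) =
      (((m - n + 1) * (2 * n - m - 3) : ℕ) : ℝ) := by
    rw [show 2 * n - m - 3 = (n - 1) - (m - n + 1) - 1 by omega]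
    push_cast [Nat.cast_sub (by omega : 1 ≤ n - 1 - (m - n + 1)),
      Nat.cast_sub (by omega : m - n + 1 ≤ n - 1)]
    ring
  rw [skewO_eq_vecMulVec, charpoly_vecMulVec_sub_vecMulVec_add (by simp; omega),
    skewO_gram (by omega) (by omega), charpoly_fin_four_skewO_gram, hsum, hprod, Fintype.card_fin]
  calc X ^ (n - 4) * (X ^ 4 + C (m : ℝ) * X ^ 2 + C (((m - n + 1) * (2 * n - m - 3) : ℕ) : ℝ))
      = X ^ (n - 4 + 4) + C (m : ℝ) * X ^ (n - 4 + 2) +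
          C (((m - n + 1) * (2 * n - m - 3) : ℕ) : ℝ) * X ^ (n - 4) := by ring
    _ = _ := by rw [Nat.sub_add_cancel (by omega : 4 ≤ n), show n - 4 + 2 = n - 2 by omega]
end

section
/- Let B^+_{n,m} be the oriented graph obtained from O^+_{n,m+1} by deleting the arc (v₁,v₂). Its skew characteristic polynomial is λⁿ + m·λ^{n-2} + (m-n+2)(2n-m-4)·λ^{n-4}. -/
/-!
With `e_a` the indicator vector of a vertex and `𝟙_U`, `𝟙_W` those of the leaves `U` of the star
and the tails `W` of the extra arcs, the skew matrix is
`e_a 𝟙_Uᵀ - 𝟙_U e_aᵀ + 𝟙_W e_bᵀ - e_b 𝟙_Wᵀ`, a product `A B` of an `n × 4` and a `4 × n` matrix.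
Hence its characteristic polynomial is `λ^(n-4)` times that of the `4 × 4` matrix `B A`, whose
entries are the intersection sizes of `{a}, {b}, U, W`; with `|U| = n - 2` and `|W| = m - n + 2`
its determinant expands to `λ⁴ + (|U| + |W|) λ² + |W| (|U| - |W|)`.
-/

open Matrix Polynomial

/-- The skew-adjacency matrix of the oriented graph `B⁺_{n,m}`, obtained from
`O⁺_{n,m+1}` by deleting the arc `(v₁, v₂)`: the star with center `v₁ = 0` on the
vertices other than `v₂ = 1`, all arcs directed away from `v₁`, together with
`m - n + 2` further arcs with tails `2, …, m-n+3` and common head `v₂ = 1`. -/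
def skewB (n m : ℕ) : Matrix (Fin n) (Fin n) ℝ :=
  Matrix.of fun i j =>
    if (i : ℕ) = 0 ∧ (j : ℕ) ≠ 0 ∧ (j : ℕ) ≠ 1 then 1
    else if (j : ℕ) = 0 ∧ (i : ℕ) ≠ 0 ∧ (i : ℕ) ≠ 1 then -1
    else if (j : ℕ) = 1 ∧ 2 ≤ (i : ℕ) ∧ (i : ℕ) ≤ m - n + 3 then 1
    else if (i : ℕ) = 1 ∧ 2 ≤ (j : ℕ) ∧ (j : ℕ) ≤ m - n + 3 then -1
    else 0

open Finset

section RankFactorization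

variable {ι κ R : Type*} [Fintype ι] [Fintype κ] [CommRing R]

omit [Fintype ι] in
theorem sum_vecMulVec_eq_transpose_mul (a b : κ → ι → R) :
    ∑ r, vecMulVec (a r) (b r) = (of a)ᵀ * of b := by
  ext i j
  simp [mul_apply, vecMulVec, Matrix.sum_apply]

theorem charpoly_sum_vecMulVec [DecidableEq ι] [DecidableEq κ] (a b : κ → ι → R)
    (hκ : Fintype.card κ ≤ Fintype.card ι) :
    (∑ r, vecMulVec (a r) (b r)).charpoly
      = X ^ (Fintype.card ι - Fintype.card κ) * (of fun r c => b r ⬝ᵥ a c).charpoly := by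
  have hgram : of b * (of a)ᵀ = of fun r c => b r ⬝ᵥ a c := by
    ext r c
    simp [mul_apply, dotProduct]
  rw [sum_vecMulVec_eq_transpose_mul, charpoly_mul_comm_of_le _ _ hκ, hgram]

end RankFactorization

section StarFan

variable {ι R : Type*} [DecidableEq ι] [CommRing R]

def indicatorVec (s : Finset ι) : ι → R := fun i => if i ∈ s then 1 else 0

theorem indicatorVec_dotProduct_indicatorVec [Fintype ι] (s t : Finset ι) :
    indicatorVec s ⬝ᵥ (indicatorVec t : ι → R) = #(s ∩ t) := by
  simp only [dotProduct, indicatorVec, mul_ite, mul_one, mul_zero, ← ite_and, sum_boole]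
  congr 2
  ext i
  simp [and_comm]

/-- The skew-adjacency matrix of the oriented graph with arcs `a → u` for `u ∈ U` and `w → b`
for `w ∈ W`. -/
def skewStarFan (a b : ι) (U W : Finset ι) : Matrix ι ι R :=
  vecMulVec (indicatorVec {a}) (indicatorVec U) - vecMulVec (indicatorVec U) (indicatorVec {a})
    + vecMulVec (indicatorVec W) (indicatorVec {b}) - vecMulVec (indicatorVec {b}) (indicatorVec W)

theorem skewStarFan_eq_sum_vecMulVec (a b : ι) (U W : Finset ι) :
    skewStarFan a b U W = ∑ r, vecMulVec
      (![indicatorVec {a}, -indicatorVec U, indicatorVec W, -indicatorVec {b}] r)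
      (![indicatorVec U, indicatorVec {a}, indicatorVec {b}, (indicatorVec W : ι → R)] r) := by
  simp [skewStarFan, Fin.sum_univ_four, neg_vecMulVec]
  abel

theorem charpoly_starFan_gram (p q : R) :
    (!![0, -p, q, 0; 1, 0, 0, 0; 0, 0, 0, -1; 0, -q, q, 0]).charpoly
      = X ^ 4 + C (p + q) * X ^ 2 + C (q * (p - q)) := by
  simp [charpoly, charmatrix, det_succ_row_zero, Fin.sum_univ_succ, Fin.succAbove]
  ring

theorem charpoly_skewStarFan [Fintype ι] {a b : ι} {U W : Finset ι} (hab : a ≠ b)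
    (haU : a ∉ U) (hbU : b ∉ U) (hWU : W ⊆ U) (hι : 4 ≤ Fintype.card ι) :
    (skewStarFan a b U W : Matrix ι ι R).charpoly
      = X ^ (Fintype.card ι - 4) *
          (X ^ 4 + C (#U + #W : R) * X ^ 2 + C (#W * (#U - #W) : R)) := by
  have haW : a ∉ W := fun h => haU (hWU h)
  have hbW : b ∉ W := fun h => hbU (hWU h)
  rw [skewStarFan_eq_sum_vecMulVec, charpoly_sum_vecMulVec _ _ (by simpa using hι),
    Fintype.card_fin, ← charpoly_starFan_gram]
  congr 2
  ext r c
  fin_cases r <;> fin_cases c <;>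
    simp [indicatorVec_dotProduct_indicatorVec, haU, hbU, haW, hbW, hab, hab.symm,
      inter_eq_left.2 hWU, inter_eq_right.2 hWU]

end StarFan

theorem skewB_eq_skewStarFan {n m : ℕ} (hn : 2 ≤ n) (hmn : m - n + 3 < n) :
    skewB n m = skewStarFan ⟨0, by omega⟩ ⟨1, by omega⟩
      ((Ico 2 n).attachFin fun _ hi => (mem_Ico.1 hi).2)
      ((Icc 2 (m - n + 3)).attachFin fun _ hi => (mem_Icc.1 hi).2.trans_lt hmn) := by
  ext i j
  simp only [skewB, skewStarFan, of_apply, Matrix.sub_apply, Matrix.add_apply, vecMulVec_apply,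
    indicatorVec, mem_attachFin, mem_Ico, mem_Icc, mem_singleton, Fin.ext_iff]
  split_ifs <;> first | (exfalso; omega) | norm_num

/-- The skew characteristic polynomial of `B⁺_{n,m}` is
`λⁿ + m λ^{n-2} + (m-n+2)(2n-m-4) λ^{n-4}`. -/
theorem skew_charpoly_B
    {n m : ℕ} (hnm : n ≤ m) (hm2 : m < 2 * (n - 2)) :
    (skewB n m).charpoly =
      X ^ n + C (m : ℝ) * X ^ (n - 2) +
        C (((m - n + 2) * (2 * n - m - 4) : ℕ) : ℝ) * X ^ (n - 4) := by
  rw [skewB_eq_skewStarFan (by omega) (by omega),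
    charpoly_skewStarFan (by simp) (by simp) (by simp) ?tails_subset_leaves (by simp; omega)]
  case tails_subset_leaves =>
    intro i
    simp only [mem_attachFin, mem_Ico, mem_Icc]
    omega
  simp only [card_attachFin, Nat.card_Ico, Nat.card_Icc, Fintype.card_fin]
  have hlin : ((n - 2 : ℕ) : ℝ) + ((m - n + 3 + 1 - 2 : ℕ) : ℝ) = m := by
    exact_mod_cast (by omega : n - 2 + (m - n + 3 + 1 - 2) = m)
  have hconst : ((m - n + 3 + 1 - 2 : ℕ) : ℝ) * ((n - 2 : ℕ) - (m - n + 3 + 1 - 2 : ℕ) : ℝ)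
      = (((m - n + 2) * (2 * n - m - 4) : ℕ) : ℝ) := by
    rw [← Nat.cast_sub (by omega), ← Nat.cast_mul]
    congr 2
    omega
  have hpow : (X : ℝ[X]) ^ n = X ^ (n - 4) * X ^ 4 := by
    rw [← pow_add, Nat.sub_add_cancel (by omega)]
  rw [hlin, hconst, hpow, show n - 2 = n - 4 + 2 by omega, pow_add]
  ring
end

section
/- Let G^σ be an oriented graph on n vertices whose skew characteristic polynomial is Σ_{i} a_{2i} λ^{n-2i} with all a_{2i} ≥ 0. Then the skew energy (the sum of absolute values of eigenvalues of the skew-adjacency matrix) is a monotonically non-decreasing function of the coefficients: if two oriented graphs G₁, G₂ on n vertices satisfy a_{2i}(G₁) ≤ a_{2i}(G₂) for all i, then E_s(G₁) ≤ E_s(G₂). -/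
/-!
If `S` is real skew-symmetric, the roots of its characteristic polynomial `P` are purely
imaginary, `±iμⱼ`, so for real `x` one has `P(x)² = ∏ⱼ (x² + μⱼ²)`. Together with
`∫₀^∞ log (1 + μ²/x²) dx = π|μ|` this gives the Coulson-type formula
`π E_s(S) = ∫₀^∞ log (P(x)² / x^{2n}) dx`. Since only the coefficients `a_{2i}` of `P` can be
nonzero, `P(x) = ∑ a_{2i} x^{n-2i}` is monotone in them for `x > 0`, and so is the integrand.
-/

open Matrix Polynomial BigOperators

noncomputable def skewEnergy {n : ℕ} (S : Matrix (Fin n) (Fin n) ℝ) : ℝ :=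
  (((S.map (fun x : ℝ => (x : ℂ))).charpoly.roots).map (fun z : ℂ => ‖z‖)).sum

open Real Set MeasureTheory Filter Topology

section CoulsonIntegral

lemma log_one_add_sq_nonneg (t : ℝ) : 0 ≤ log (1 + t ^ 2) :=
  log_nonneg (le_add_of_nonneg_right (sq_nonneg t))

lemma mul_log_one_add_div_sq (c x : ℝ) :
    x * log (1 + (c / x) ^ 2) = x * log (x ^ 2 + c ^ 2) - 2 * (x * log x) := by
  rcases eq_or_ne x 0 with rfl | hx
  · simp
  rw [show 1 + (c / x) ^ 2 = (x ^ 2 + c ^ 2) / x ^ 2 by field_simp,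
    log_div (by positivity) (by positivity), log_pow]
  push_cast
  ring

variable {c : ℝ}

lemma continuous_mul_log_one_add_div_sq_add_arctan (hc : 0 < c) :
    Continuous fun x => x * log (1 + (c / x) ^ 2) + 2 * c * arctan (x / c) := by
  -- continuity at `0` comes from that of `x * log x`
  simp_rw [mul_log_one_add_div_sq]
  have : ∀ x : ℝ, x ^ 2 + c ^ 2 ≠ 0 := fun x => by positivity
  have := continuous_mul_log
  fun_prop (disch := assumption)

lemma hasDerivAt_mul_log_one_add_div_sq_add_arctan (hc : 0 < c) {x : ℝ} (hx : x ≠ 0) :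
    HasDerivAt (fun x => x * log (1 + (c / x) ^ 2) + 2 * c * arctan (x / c))
      (log (1 + (c / x) ^ 2)) x := by
  have hsq : HasDerivAt (fun x => 1 + (c / x) ^ 2) (-(2 * c ^ 2 / x ^ 3)) x := by
    refine ((((hasDerivAt_inv hx).const_mul c).pow 2).const_add 1).congr_deriv ?_
    norm_num
    field_simp
  have hlog := (hasDerivAt_id' x).mul (hsq.log (by positivity))
  have harctan := ((hasDerivAt_arctan (x / c)).comp x ((hasDerivAt_id x).div_const c)).const_mul
    (2 * c)
  refine (hlog.add harctan).congr_deriv ?_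
  field_simp
  ring

lemma tendsto_mul_log_one_add_div_sq_add_arctan (hc : 0 < c) :
    Tendsto (fun x => x * log (1 + (c / x) ^ 2) + 2 * c * arctan (x / c)) atTop (𝓝 (π * c)) := by
  have hlog : Tendsto (fun x => x * log (1 + (c / x) ^ 2)) atTop (𝓝 0) := by
    refine squeeze_zero' ?_ ?_ (by simpa using tendsto_inv_atTop_zero.const_mul (c ^ 2))
    all_goals filter_upwards [eventually_gt_atTop 0] with x hx
    · have := log_one_add_sq_nonneg (c / x)
      positivity
    · calc x * log (1 + (c / x) ^ 2) ≤ x * (c / x) ^ 2 := by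
            gcongr
            exact (log_le_sub_one_of_pos (by positivity)).trans_eq (by ring)
        _ = c ^ 2 * x⁻¹ := by field_simp
  have harctan : Tendsto (fun x => 2 * c * arctan (x / c)) atTop (𝓝 (2 * c * (π / 2))) :=
    ((tendsto_nhds_of_tendsto_nhdsWithin tendsto_arctan_atTop).comp
      (tendsto_id.atTop_div_const hc)).const_mul _
  convert hlog.add harctan using 2
  ring

lemma div_sq_eq_abs_div_sq (μ x : ℝ) : (μ / x) ^ 2 = (|μ| / x) ^ 2 := by
  rw [div_pow, div_pow, sq_abs]

lemma integrableOn_log_one_add_div_sq (μ : ℝ) :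
    IntegrableOn (fun x => log (1 + (μ / x) ^ 2)) (Ioi 0) := by
  obtain rfl | hμ := eq_or_ne μ 0
  · simp
  simp_rw [div_sq_eq_abs_div_sq μ]
  have hc : 0 < |μ| := abs_pos.2 hμ
  exact integrableOn_Ioi_deriv_of_nonneg
    (continuous_mul_log_one_add_div_sq_add_arctan hc).continuousWithinAt
    (fun x hx => hasDerivAt_mul_log_one_add_div_sq_add_arctan hc (ne_of_gt hx))
    (fun x _ => log_one_add_sq_nonneg _) (tendsto_mul_log_one_add_div_sq_add_arctan hc)

lemma integral_log_one_add_div_sq (μ : ℝ) :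
    ∫ x in Ioi 0, log (1 + (μ / x) ^ 2) = π * |μ| := by
  obtain rfl | hμ := eq_or_ne μ 0
  · simp
  simp_rw [div_sq_eq_abs_div_sq μ]
  have hc : 0 < |μ| := abs_pos.2 hμ
  rw [integral_Ioi_of_hasDerivAt_of_nonneg
    (continuous_mul_log_one_add_div_sq_add_arctan hc).continuousWithinAt
    (fun x hx => hasDerivAt_mul_log_one_add_div_sq_add_arctan hc (ne_of_gt hx))
    (fun x _ => log_one_add_sq_nonneg _) (tendsto_mul_log_one_add_div_sq_add_arctan hc)]
  simp

end CoulsonIntegral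

section MultisetIntegral

variable {ι α E : Type*} [MeasurableSpace α] {μ : Measure α} [NormedAddCommGroup E]
  (m : Multiset ι) {f : ι → α → E}

theorem MeasureTheory.integrable_multiset_sum_map (hf : ∀ i ∈ m, Integrable (f i) μ) :
    Integrable (fun a => (m.map fun i => f i a).sum) μ := by
  induction m using Multiset.induction_on with
  | empty => simp
  | cons i m ih =>
    simp only [Multiset.map_cons, Multiset.sum_cons]
    exact (hf i (m.mem_cons_self i)).add (ih fun j hj => hf j (Multiset.mem_cons_of_mem hj))

theorem MeasureTheory.integral_multiset_sum_map [NormedSpace ℝ E]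
    (hf : ∀ i ∈ m, Integrable (f i) μ) :
    ∫ a, (m.map fun i => f i a).sum ∂μ = (m.map fun i => ∫ a, f i a ∂μ).sum := by
  induction m using Multiset.induction_on with
  | empty => simp
  | cons i m ih =>
    have hm : ∀ j ∈ m, Integrable (f j) μ := fun j hj => hf j (Multiset.mem_cons_of_mem hj)
    simp only [Multiset.map_cons, Multiset.sum_cons]
    rw [integral_add (hf i (m.mem_cons_self i)) (integrable_multiset_sum_map m hm), ih hm]

end MultisetIntegral

section CoeffComparison

theorem Polynomial.eval_le_eval_of_coeff_le {R : Type*} [Semiring R] [PartialOrder R]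
    [IsOrderedRing R] {p q : R[X]} (h : ∀ k, p.coeff k ≤ q.coeff k) {x : R} (hx : 0 ≤ x) :
    p.eval x ≤ q.eval x := by
  set N := max p.natDegree q.natDegree + 1
  rw [eval_eq_sum_range' (n := N) (by omega), eval_eq_sum_range' (n := N) (by omega)]
  exact Finset.sum_le_sum fun k _ => mul_le_mul_of_nonneg_right (h k) (pow_nonneg hx k)

theorem Polynomial.coeff_le_coeff_of_coeff_sub_two_mul_le {R : Type*} [Semiring R] [Preorder R]
    {p q : R[X]} {n : ℕ} (hp : p.natDegree ≤ n) (hq : q.natDegree ≤ n)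
    (hp_odd : ∀ k, Odd (n + k) → p.coeff k = 0) (hq_odd : ∀ k, Odd (n + k) → q.coeff k = 0)
    (h : ∀ i ≤ n / 2, p.coeff (n - 2 * i) ≤ q.coeff (n - 2 * i)) (k : ℕ) :
    p.coeff k ≤ q.coeff k := by
  by_cases hk : n < k
  · rw [coeff_eq_zero_of_natDegree_lt (hp.trans_lt hk),
      coeff_eq_zero_of_natDegree_lt (hq.trans_lt hk)]
  obtain heven | hodd := Nat.even_or_odd (n + k)
  · have hi : (n - k) / 2 ≤ n / 2 := by omega
    have hk' : n - 2 * ((n - k) / 2) = k := by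
      obtain ⟨j, hj⟩ := heven
      omega
    simpa only [hk'] using h _ hi
  · rw [hp_odd k hodd, hq_odd k hodd]

end CoeffComparison

section SkewSymmetric

variable {ι : Type*} {S : Matrix ι ι ℝ}

theorem Matrix.isHermitian_I_smul_map_ofReal (hS : Sᵀ = -S) :
    (Complex.I • S.map ((↑) : ℝ → ℂ)).IsHermitian := by
  ext i j
  have hij : S j i = -S i j := by simpa using congrFun (congrFun hS i) j
  simp [hij]

variable [Fintype ι] [DecidableEq ι]

theorem Matrix.charpoly_comp_neg_X_of_transpose_eq_neg (hS : Sᵀ = -S) :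
    S.charpoly.comp (-X) = C ((-1) ^ Fintype.card ι) * S.charpoly := by
  refine Polynomial.funext fun x => ?_
  have hneg : scalar ι (-x) - S = -(scalar ι x + S) := by
    rw [map_neg]
    abel
  have htrans : (scalar ι x + S)ᵀ = scalar ι x - S := by
    rw [transpose_add, hS, scalar_apply, diagonal_transpose, sub_eq_add_neg]
  simp only [eval_comp, eval_neg, eval_X, eval_mul, eval_C, eval_charpoly, hneg, det_neg,
    ← det_transpose (scalar ι x + S), htrans]

theorem Matrix.charpoly_coeff_eq_zero_of_odd (hS : Sᵀ = -S) {k : ℕ}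
    (hk : Odd (Fintype.card ι + k)) : S.charpoly.coeff k = 0 := by
  have h := charpoly_comp_neg_X_of_transpose_eq_neg hS
  rw [show (-X : ℝ[X]) = C (-1) * X by simp] at h
  have hcoeff := congrArg (coeff · k) h
  simp only [comp_C_mul_X_coeff, coeff_C_mul] at hcoeff
  have hsign : (-1 : ℝ) ^ Fintype.card ι * (-1) ^ k = -1 := by
    rw [← pow_add]
    exact hk.neg_one_pow
  have hsq : (-1 : ℝ) ^ Fintype.card ι * (-1) ^ Fintype.card ι = 1 := by
    rw [← mul_pow]
    simp
  -- `(-1) ^ k = -(-1) ^ card ι`, so `hcoeff` says the coefficient equals its own negative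
  linear_combination (-(-1) ^ Fintype.card ι / 2) * hcoeff + (S.charpoly.coeff k / 2) * hsign
    - (S.charpoly.coeff k / 2) * hsq

theorem Matrix.re_eq_zero_of_mem_roots_charpoly (hS : Sᵀ = -S) {z : ℂ}
    (hz : z ∈ (S.map ((↑) : ℝ → ℂ)).charpoly.roots) : z.re = 0 := by
  have hspec : Complex.I * z ∈ spectrum ℂ (Complex.I • S.map ((↑) : ℝ → ℂ)) :=
    spectrum.smul_mem_smul_iff (r := Units.mk0 Complex.I Complex.I_ne_zero) |>.2
      (mem_spectrum_of_isRoot_charpoly (isRoot_of_mem_roots hz))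
  rw [(isHermitian_I_smul_map_ofReal hS).spectrum_eq_image_range] at hspec
  obtain ⟨t, -, ht⟩ := hspec
  simpa using (congrArg Complex.im ht).symm

theorem Matrix.card_roots_charpoly_map_ofReal :
    Multiset.card (S.map ((↑) : ℝ → ℂ)).charpoly.roots = Fintype.card ι := by
  rw [splits_iff_card_roots.1 (IsAlgClosed.splits _), charpoly_natDegree_eq_dim]

theorem Matrix.charpoly_eval_sq_eq_prod (hS : Sᵀ = -S) (x : ℝ) :
    S.charpoly.eval x ^ 2 =
      ((S.map ((↑) : ℝ → ℂ)).charpoly.roots.map fun z => x ^ 2 + z.im ^ 2).prod := by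
  have heval := (IsAlgClosed.splits (S.map ((↑) : ℝ → ℂ)).charpoly).eval_eq_prod_roots x
  have hx : (S.map ((↑) : ℝ → ℂ)).charpoly.eval (x : ℂ) = S.charpoly.eval x := by
    rw [show S.map ((↑) : ℝ → ℂ) = S.map Complex.ofRealHom from rfl, charpoly_map, eval_map]
    exact eval₂_at_apply _ _
  rw [(charpoly_monic _).leadingCoeff, one_mul, hx] at heval
  rw [sq, ← Complex.normSq_ofReal, heval, map_multiset_prod, Multiset.map_map]
  refine congrArg _ (Multiset.map_congr rfl fun z hz => ?_)
  simp [Complex.normSq_apply, re_eq_zero_of_mem_roots_charpoly hS hz]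
  ring

theorem Matrix.charpoly_eval_ne_zero (hS : Sᵀ = -S) {x : ℝ} (hx : x ≠ 0) :
    S.charpoly.eval x ≠ 0 := by
  have hpos : 0 < S.charpoly.eval x ^ 2 := by
    rw [charpoly_eval_sq_eq_prod hS]
    exact Multiset.prod_pos fun a ha => by
      obtain ⟨z, -, rfl⟩ := Multiset.mem_map.1 ha
      positivity
  exact pow_ne_zero_iff two_ne_zero |>.1 hpos.ne'

theorem Matrix.log_charpoly_eval_sq_div (hS : Sᵀ = -S) {x : ℝ} (hx : x ≠ 0) :
    log (S.charpoly.eval x ^ 2 / x ^ (2 * Fintype.card ι)) =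
      ((S.map ((↑) : ℝ → ℂ)).charpoly.roots.map fun z => log (1 + (z.im / x) ^ 2)).sum := by
  have hden : x ^ (2 * Fintype.card ι) =
      ((S.map ((↑) : ℝ → ℂ)).charpoly.roots.map fun _ => x ^ 2).prod := by
    rw [Multiset.map_const', Multiset.prod_replicate, card_roots_charpoly_map_ofReal, pow_mul]
  rw [charpoly_eval_sq_eq_prod hS, hden, ← Multiset.prod_map_div,
    log_multiset_prod fun a ha => ?_, Multiset.map_map]
  · refine congrArg _ (Multiset.map_congr rfl fun z _ => ?_)
    simp only [Function.comp_apply]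
    congr 1
    field_simp
  · obtain ⟨z, -, rfl⟩ := Multiset.mem_map.1 ha
    positivity

end SkewSymmetric

section SkewEnergy

variable {n : ℕ} {S : Matrix (Fin n) (Fin n) ℝ}

theorem skewEnergy_eq_sum_abs_im (hS : Sᵀ = -S) :
    skewEnergy S = ((S.map ((↑) : ℝ → ℂ)).charpoly.roots.map fun z => |z.im|).sum :=
  congrArg _ <| Multiset.map_congr rfl fun _ hz =>
    (Complex.abs_im_eq_norm.2 (re_eq_zero_of_mem_roots_charpoly hS hz)).symm

theorem integrableOn_log_charpoly_eval_sq_div (hS : Sᵀ = -S) :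
    IntegrableOn (fun x => log (S.charpoly.eval x ^ 2 / x ^ (2 * n))) (Ioi 0) := by
  refine IntegrableOn.congr_fun (integrable_multiset_sum_map (S.map ((↑) : ℝ → ℂ)).charpoly.roots
    fun z _ => integrableOn_log_one_add_div_sq z.im) (fun x hx => ?_) measurableSet_Ioi
  simpa using (log_charpoly_eval_sq_div hS (ne_of_gt hx)).symm

theorem pi_mul_skewEnergy_eq_integral (hS : Sᵀ = -S) :
    π * skewEnergy S = ∫ x in Ioi 0, log (S.charpoly.eval x ^ 2 / x ^ (2 * n)) := by
  rw [setIntegral_congr_fun measurableSet_Ioi fun x hx => by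
      simpa using log_charpoly_eval_sq_div hS (ne_of_gt hx),
    integral_multiset_sum_map _ (f := fun (z : ℂ) x => log (1 + (z.im / x) ^ 2))
      fun z _ => integrableOn_log_one_add_div_sq z.im,
    skewEnergy_eq_sum_abs_im hS, ← Multiset.sum_map_mul_left]
  simp_rw [integral_log_one_add_div_sq]

end SkewEnergy

theorem skewEnergy_monotone_general
    {n : ℕ} (S₁ S₂ : Matrix (Fin n) (Fin n) ℝ)
    (hskew₁ : S₁ᵀ = -S₁) (hskew₂ : S₂ᵀ = -S₂)
    (hpos₁ : ∀ i ≤ n / 2, 0 ≤ S₁.charpoly.coeff (n - 2 * i))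
    (hle : ∀ i ≤ n / 2, S₁.charpoly.coeff (n - 2 * i) ≤ S₂.charpoly.coeff (n - 2 * i)) :
    skewEnergy S₁ ≤ skewEnergy S₂ := by
  have hdeg (S : Matrix (Fin n) (Fin n) ℝ) : S.charpoly.natDegree ≤ n := by
    simp [charpoly_natDegree_eq_dim]
  have hodd {S : Matrix (Fin n) (Fin n) ℝ} (hS : Sᵀ = -S) (k : ℕ) (hk : Odd (n + k)) :
      S.charpoly.coeff k = 0 :=
    charpoly_coeff_eq_zero_of_odd hS (by simpa using hk)
  have hcoeff := coeff_le_coeff_of_coeff_sub_two_mul_le (hdeg S₁) (hdeg S₂)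
    (hodd hskew₁) (hodd hskew₂) hle
  have hcoeff₀ := coeff_le_coeff_of_coeff_sub_two_mul_le (p := 0) (by simp) (hdeg S₁)
    (by simp) (hodd hskew₁) (by simpa using hpos₁)
  refine le_of_mul_le_mul_left ?_ pi_pos
  rw [pi_mul_skewEnergy_eq_integral hskew₁, pi_mul_skewEnergy_eq_integral hskew₂]
  refine setIntegral_mono_on (integrableOn_log_charpoly_eval_sq_div hskew₁)
    (integrableOn_log_charpoly_eval_sq_div hskew₂) measurableSet_Ioi fun x (hx : 0 < x) => ?_
  have h₀ : 0 ≤ S₁.charpoly.eval x := by simpa using eval_le_eval_of_coeff_le hcoeff₀ hx.le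
  have hne := charpoly_eval_ne_zero hskew₁ hx.ne'
  gcongr
  exact eval_le_eval_of_coeff_le hcoeff hx.le

/-- The skew energy is monotone in the coefficients: if two oriented graphs on `n`
vertices have skew characteristic polynomials `∑ a_{2i} λ^{n-2i}` with all `a_{2i} ≥ 0`,
and `a_{2i}(G₁) ≤ a_{2i}(G₂)` for all `i`, then `E_s(G₁) ≤ E_s(G₂)`. -/
theorem skewEnergy_monotone
    {n : ℕ} (G₁ G₂ : SimpleGraph (Fin n)) [DecidableRel G₁.Adj] [DecidableRel G₂.Adj]
    (S₁ S₂ : Matrix (Fin n) (Fin n) ℝ)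
    (hskew₁ : S₁ᵀ = -S₁) (hskew₂ : S₂ᵀ = -S₂)
    (horient₁ : ∀ i j, G₁.Adj i j → S₁ i j = 1 ∨ S₁ i j = -1)
    (hzero₁ : ∀ i j, ¬ G₁.Adj i j → S₁ i j = 0)
    (horient₂ : ∀ i j, G₂.Adj i j → S₂ i j = 1 ∨ S₂ i j = -1)
    (hzero₂ : ∀ i j, ¬ G₂.Adj i j → S₂ i j = 0)
    (hpos₁ : ∀ i ≤ n / 2, 0 ≤ S₁.charpoly.coeff (n - 2 * i))
    (hpos₂ : ∀ i ≤ n / 2, 0 ≤ S₂.charpoly.coeff (n - 2 * i))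
    (hle : ∀ i ≤ n / 2, S₁.charpoly.coeff (n - 2 * i) ≤ S₂.charpoly.coeff (n - 2 * i)) :
    skewEnergy S₁ ≤ skewEnergy S₂ :=
  skewEnergy_monotone_general S₁ S₂ hskew₁ hskew₂ hpos₁ hle
end
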